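/- arXiv:1706.00163 — 6 statements merged into one kernel-verified Lean document; each statement's English description precedes it below -/
import Mathlib

section
/- Let B be an N×N real matrix and C_E an N×N real symmetric positive semidefinite matrix; for l ∈ ℕ set C(l) = B^l C_E (B^T)^l. Let e_1,…,e_k be random vectors in ℝ^N with E[e_i] = 0 and E[e_i e_j^T] = δ_{ij} C_E for all i,j. Let G be a real k×n matrix (k ≤ n) of rank k, let l_1,…,l_n ∈ ℕ be such that trace(C(l_i)) > 0 for every i, and set Λ = diag(trace(C(l_1)),…,trace(C(l_n))). Define the encoded errors ε_i = Σ_{j=1}^k G_{ji} e_j for i = 1,…,n, the decoding matrix L = (G Λ^{-1} G^T)^{-1} G Λ^{-1} (the matrix G Λ^{-1} G^T is invertible since G has rank k and Λ is positive definite), and the decoded error matrix E = [B^{l_1} ε_1, …, B^{l_n} ε_n] · L^T (an N×k random matrix). Then E[‖E‖_F^2] ≤ σ_max(G^T G) · trace((G Λ^{-1} G^T)^{-1}), where ‖·‖_F is the Frobenius norm and σ_max(G^T G) is the largest eigenvalue of G^T G. In particular, if G has orthonormal rows (G G^T = I_k), then E[‖E‖_F^2] ≤ trace((G Λ^{-1}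 G^T)^{-1}). -/
open MeasureTheory Matrix
open scoped BigOperators

/-- `C(l) = Bˡ C_E (Bᵀ)ˡ`. -/
noncomputable def matC {N : ℕ} (B CE : Matrix (Fin N) (Fin N) ℝ) (l : ℕ) :
    Matrix (Fin N) (Fin N) ℝ := B ^ l * CE * (Bᵀ) ^ l

/-- largest eigenvalue of a real symmetric matrix. -/
noncomputable def maxEigR {n : ℕ} (A : Matrix (Fin n) (Fin n) ℝ) : ℝ :=
  if h : A.IsHermitian then ⨆ i, h.eigenvalues i else 0

/-!
The decoded error is a linear image of the uncorrelated `e_j`: its `c`-th column is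
`∑_j M_{cj} e_j` with `M_{cj} = ∑_i G_{ji} L_{ci} B^{l_i}`, so its mean squared Frobenius norm
is `∑_{c,j} trace (M_{cj} C_E M_{cj}ᵀ)`. Factoring `C_E = Rᵀ R`, every entry of `M_{cj} Rᵀ`
is the `j`-th coordinate of `G v` for a vector `v` indexed by the workers, and
`‖G v‖² ≤ σ_max(GᵀG) ‖v‖²` (Rayleigh). Summing back, the bound is
`σ_max · ∑_i ‖L_{·i}‖² trace C(l_i) = σ_max · trace (L Λ Lᵀ)`, and `L Λ Lᵀ = (G Λ⁻¹ Gᵀ)⁻¹`.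
If `G Gᵀ = 1` then `GᵀG` is an orthogonal projection, so `‖G v‖ ≤ ‖v‖` and `σ_max` may be
replaced by `1`.
-/

namespace Matrix

section

variable {n : Type*} [Fintype n]

theorem IsHermitian.dotProduct_mulVec_le_iSup_eigenvalues [DecidableEq n]
    {A : Matrix n n ℝ} (hA : A.IsHermitian) (v : n → ℝ) :
    v ⬝ᵥ (A *ᵥ v) ≤ (⨆ i, hA.eigenvalues i) * (v ⬝ᵥ v) := by
  set c := ⨆ i, hA.eigenvalues i
  set U : Matrix n n ℝ := ↑hA.eigenvectorUnitary
  have hdiag : (diagonal fun i => c - hA.eigenvalues i).PosSemidef :=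
    PosSemidef.diagonal fun i => sub_nonneg.mpr <| le_ciSup (Set.finite_range _).bddAbove i
  have hgap : c • 1 - A = U * diagonal (fun i => c - hA.eigenvalues i) * Uᴴ := by
    conv_lhs => rw [hA.spectral_theorem, Unitary.conjStarAlgAut_apply]
    rw [← diagonal_sub, mul_sub, sub_mul, ← star_eq_conjTranspose]
    simp [U, ← smul_one_eq_diagonal]
  have := (hgap ▸ hdiag.mul_mul_conjTranspose_same U).dotProduct_mulVec_nonneg v
  rw [star_trivial, sub_mulVec, dotProduct_sub, smul_mulVec, one_mulVec, dotProduct_smul,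
    smul_eq_mul] at this
  linarith

variable {m : Type*} [Fintype m]

theorem dotProduct_mulVec_self_eq (G : Matrix m n ℝ) (v : n → ℝ) :
    (G *ᵥ v) ⬝ᵥ (G *ᵥ v) = v ⬝ᵥ ((Gᵀ * G) *ᵥ v) := by
  rw [← mulVec_mulVec, dotProduct_mulVec v, vecMul_transpose]

theorem dotProduct_mulVec_self_le_of_mul_transpose_eq_one [DecidableEq m] [DecidableEq n]
    {G : Matrix m n ℝ} (hG : G * Gᵀ = 1) (v : n → ℝ) :
    (G *ᵥ v) ⬝ᵥ (G *ᵥ v) ≤ v ⬝ᵥ v := by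
  have hP : IsIdempotentElem (Gᵀ * G) := by
    rw [IsIdempotentElem, Matrix.mul_assoc, ← Matrix.mul_assoc G, hG, Matrix.one_mul]
  have hQ : (1 - Gᵀ * G)ᴴ = 1 - Gᵀ * G := by
    simp [conjTranspose_eq_transpose_of_trivial]
  have hpsd : (1 - Gᵀ * G).PosSemidef := by
    have := posSemidef_conjTranspose_mul_self (1 - Gᵀ * G)
    rwa [hQ, hP.one_sub.eq] at this
  have := hpsd.dotProduct_mulVec_nonneg v
  rw [star_trivial, sub_mulVec, dotProduct_sub, one_mulVec, ← dotProduct_mulVec_self_eq] at this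
  linarith

theorem vecMul_injective_of_rank_eq_card {K : Type*} [Field K] {G : Matrix m n K}
    (hG : G.rank = Fintype.card m) : Function.Injective G.vecMul := by
  classical
  have hsum := LinearMap.finrank_range_add_finrank_ker Gᵀ.mulVecLin
  rw [← Matrix.rank, rank_transpose, hG, Module.finrank_fintype_fun_eq_card,
    Nat.add_eq_left, Submodule.finrank_eq_zero] at hsum
  simpa [Function.Injective, mulVec_transpose] using LinearMap.ker_eq_bot.mp hsum

theorem PosDef.mul_inv_mul_transpose [DecidableEq n] {Λ : Matrix n n ℝ} (hΛ : Λ.PosDef)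
    {G : Matrix m n ℝ} (hG : G.rank = Fintype.card m) : (G * Λ⁻¹ * Gᵀ).PosDef := by
  simpa [conjTranspose_eq_transpose_of_trivial] using
    hΛ.inv.mul_mul_conjTranspose_same (vecMul_injective_of_rank_eq_card hG)

end

section

variable {m n : Type*} [Fintype m] [Fintype n]

theorem trace_mul_transpose_self (A : Matrix m n ℝ) :
    (A * Aᵀ).trace = ∑ a, ∑ t, A a t ^ 2 := by
  simp [trace, mul_apply, sq]

theorem trace_mul_diagonal_mul_transpose [DecidableEq n] (L : Matrix m n ℝ) (d : n → ℝ) :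
    (L * diagonal d * Lᵀ).trace = ∑ i, (∑ c, L c i ^ 2) * d i := by
  simp only [trace, diag, mul_apply (M := L * diagonal d), mul_diagonal, transpose_apply,
    Finset.sum_mul]
  rw [Finset.sum_comm]
  exact Finset.sum_congr rfl fun _ _ => Finset.sum_congr rfl fun _ _ => by ring

theorem inv_mul_inv_mul_mul_transpose {K : Type*} [Field K] [DecidableEq m] [DecidableEq n]
    {Λ : Matrix n n K} (hΛ : IsUnit Λ) (hΛsymm : Λᵀ = Λ) {G : Matrix m n K}
    (hH : IsUnit (G * Λ⁻¹ * Gᵀ)) :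
    ((G * Λ⁻¹ * Gᵀ)⁻¹ * G * Λ⁻¹) * Λ * ((G * Λ⁻¹ * Gᵀ)⁻¹ * G * Λ⁻¹)ᵀ = (G * Λ⁻¹ * Gᵀ)⁻¹ := by
  set H := G * Λ⁻¹ * Gᵀ with hHdef
  have hHsymm : Hᵀ = H := by simp [H, transpose_nonsing_inv, hΛsymm, Matrix.mul_assoc]
  have hT : (H⁻¹ * G * Λ⁻¹)ᵀ = Λ⁻¹ * Gᵀ * H⁻¹ := by
    simp [transpose_nonsing_inv, hΛsymm, hHsymm, Matrix.mul_assoc]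
  rw [hT]
  calc H⁻¹ * G * Λ⁻¹ * Λ * (Λ⁻¹ * Gᵀ * H⁻¹) = H⁻¹ * (G * (Λ⁻¹ * Λ) * Λ⁻¹ * Gᵀ) * H⁻¹ := by
        simp only [Matrix.mul_assoc]
    _ = H⁻¹ := by
        rw [nonsing_inv_mul _ ((isUnit_iff_isUnit_det _).mp hΛ), Matrix.mul_one, ← hHdef,
          nonsing_inv_mul _ ((isUnit_iff_isUnit_det _).mp hH), Matrix.one_mul]

theorem sum_trace_sum_smul_mul_mul_transpose_le {ι κ : Type*} [Fintype ι] [Fintype κ]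
    {C : Matrix n n ℝ} (hC : C.PosSemidef) {G : Matrix κ ι ℝ} {σ : ℝ}
    (hσ : ∀ v, (G *ᵥ v) ⬝ᵥ (G *ᵥ v) ≤ σ * (v ⬝ᵥ v)) (Y : ι → Matrix m n ℝ) :
    ∑ j, ((∑ i, G j i • Y i) * C * (∑ i, G j i • Y i)ᵀ).trace
      ≤ σ * ∑ i, (Y i * C * (Y i)ᵀ).trace := by
  classical
  open scoped MatrixOrder in
  obtain ⟨R, rfl⟩ := CStarAlgebra.nonneg_iff_eq_star_mul_self.mp hC.nonneg
  have hfrob (X : Matrix m n ℝ) : (X * (star R * R) * Xᵀ).trace = ∑ a, ∑ t, (X * Rᵀ) a t ^ 2 := by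
    rw [← trace_mul_transpose_self]
    simp [star_eq_conjTranspose, conjTranspose_eq_transpose_of_trivial, transpose_mul,
      Matrix.mul_assoc]
  set z : m → n → ι → ℝ := fun a t i => (Y i * Rᵀ) a t
  calc ∑ j, ((∑ i, G j i • Y i) * (star R * R) * (∑ i, G j i • Y i)ᵀ).trace
      = ∑ a, ∑ t, (G *ᵥ z a t) ⬝ᵥ (G *ᵥ z a t) := by
        simp_rw [hfrob]
        simp only [Matrix.sum_mul, smul_mul, sum_apply, smul_apply, smul_eq_mul, dotProduct,
          mulVec, z, sq]
        exact Finset.sum_comm.trans (Finset.sum_congr rfl fun _ _ => Finset.sum_comm)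
    _ ≤ ∑ a, ∑ t, σ * (z a t ⬝ᵥ z a t) := by gcongr with a _ t _; exact hσ _
    _ = σ * ∑ i, (Y i * (star R * R) * (Y i)ᵀ).trace := by
        simp only [hfrob, Finset.mul_sum, dotProduct, z, sq]
        exact (Finset.sum_congr rfl fun _ _ => Finset.sum_comm).trans Finset.sum_comm

end

section

variable {m n κ : Type*}

def stackSmul {R : Type*} [Mul R] (w : κ → R) (A : Matrix m n R) : Matrix (m × κ) n R :=
  of fun p b => w p.2 * A p.1 b

theorem stackSmul_mulVec [Fintype n] (w : κ → ℝ) (A : Matrix m n ℝ) (v : n → ℝ) (a : m)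
    (c : κ) : (stackSmul w A *ᵥ v) (a, c) = w c * (A *ᵥ v) a := by
  simp [stackSmul, mulVec, dotProduct, Finset.mul_sum, mul_assoc]

theorem trace_stackSmul_mul_mul_transpose [Fintype m] [Fintype n] [Fintype κ] (w : κ → ℝ)
    (A : Matrix m n ℝ) (C : Matrix n n ℝ) :
    (stackSmul w A * C * (stackSmul w A)ᵀ).trace = (∑ c, w c ^ 2) * (A * C * Aᵀ).trace := by
  simp only [trace, stackSmul, diag_apply, mul_apply, of_apply, transpose_apply, Finset.sum_mul,
    Fintype.sum_prod_type, Finset.mul_sum]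
  refine Finset.sum_congr rfl fun _ _ => ?_
  rw [Finset.sum_comm]
  refine Finset.sum_congr rfl fun _ _ => ?_
  rw [Finset.sum_comm]
  exact Finset.sum_congr rfl fun _ _ => Finset.sum_congr rfl fun _ _ => by ring

end

end Matrix

theorem integral_sum_sq_sum_mul {Ω κ m : Type*} [MeasurableSpace Ω] {μ : Measure Ω}
    [Fintype κ] [Fintype m] {x : κ → Ω → ℝ}
    (h_int : ∀ p q, Integrable (fun ω => x p ω * x q ω) μ) (K : m → κ → ℝ) :
    ∫ ω, ∑ r, (∑ p, K r p * x p ω) ^ 2 ∂μ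
      = ∑ r, ∑ p, ∑ q, K r p * K r q * ∫ ω, x p ω * x q ω ∂μ := by
  have hexp (ω : Ω) : ∑ r, (∑ p, K r p * x p ω) ^ 2
      = ∑ r, ∑ p, ∑ q, K r p * K r q * (x p ω * x q ω) := by
    simp only [sq, Finset.sum_mul_sum]
    exact Finset.sum_congr rfl fun _ _ => Finset.sum_congr rfl fun _ _ =>
      Finset.sum_congr rfl fun _ _ => by ring
  have hint (r p q) : Integrable (fun ω => K r p * K r q * (x p ω * x q ω)) μ :=
    (h_int p q).const_mul _
  simp_rw [hexp]
  rw [integral_finsetSum _ fun r _ => integrable_finsetSum _ fun p _ =>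
    integrable_finsetSum _ fun q _ => hint r p q]
  refine Finset.sum_congr rfl fun r _ => ?_
  rw [integral_finsetSum _ fun p _ => integrable_finsetSum _ fun q _ => hint r p q]
  refine Finset.sum_congr rfl fun p _ => ?_
  rw [integral_finsetSum _ fun q _ => hint r p q]
  simp_rw [integral_const_mul]

theorem integral_sum_sq_sum_mulVec {Ω ι m ν : Type*} [MeasurableSpace Ω] {μ : Measure Ω}
    [Fintype ι] [DecidableEq ι] [Fintype m] [Fintype ν] {e : ι → Ω → ν → ℝ}
    {C : Matrix ν ν ℝ} (h_int : ∀ i j a b, Integrable (fun ω => e i ω a * e j ω b) μ)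
    (h_cov : ∀ i j a b, ∫ ω, e i ω a * e j ω b ∂μ = if i = j then C a b else 0)
    (M : ι → Matrix m ν ℝ) :
    ∫ ω, ∑ r, (∑ j, M j *ᵥ e j ω) r ^ 2 ∂μ = ∑ j, (M j * C * (M j)ᵀ).trace := by
  have hlin (ω r) : (∑ j, M j *ᵥ e j ω) r = ∑ p : ι × ν, M p.1 r p.2 * e p.1 ω p.2 := by
    simp [Finset.sum_apply, mulVec, dotProduct, Fintype.sum_prod_type]
  simp_rw [hlin]
  rw [integral_sum_sq_sum_mul (fun p q => h_int p.1 q.1 p.2 q.2)]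
  simp only [h_cov, mul_ite, mul_zero, Fintype.sum_prod_type, Finset.sum_ite_irrel,
    Finset.sum_const_zero, Finset.sum_ite_eq, Finset.mem_univ, ↓reduceIte, trace, diag_apply,
    mul_apply, transpose_apply]
  rw [Finset.sum_comm]
  refine Finset.sum_congr rfl fun _ _ => Finset.sum_congr rfl fun _ _ => ?_
  simp only [Finset.sum_mul]
  rw [Finset.sum_comm]
  exact Finset.sum_congr rfl fun _ _ => Finset.sum_congr rfl fun _ _ => by ring

theorem decoded_error_eq_sum_mulVec {Ω ι κ m ν : Type*} [Fintype ι] [Fintype κ] [Fintype ν]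
    (A : ι → Matrix m ν ℝ) (G L : Matrix κ ι ℝ)
    {e : κ → Ω → ν → ℝ} {ε : ι → Ω → ν → ℝ} {E : Ω → Matrix m κ ℝ}
    (hε : ∀ i ω a, ε i ω a = ∑ j, G j i * e j ω a)
    (hE : ∀ ω a c, E ω a c = ∑ i, (A i *ᵥ ε i ω) a * L c i) (ω : Ω) (a : m) (c : κ) :
    E ω a c = (∑ j, (∑ i, G j i • stackSmul (fun c => L c i) (A i)) *ᵥ e j ω) (a, c) := by
  have hε' (i) : ε i ω = ∑ j, G j i • e j ω := funext fun b => by simp [hε]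
  simp only [hE, hε', mulVec_sum, mulVec_smul, sum_mulVec, smul_mulVec, Finset.sum_apply,
    Pi.smul_apply, smul_eq_mul, stackSmul_mulVec, Finset.sum_mul]
  rw [Finset.sum_comm]
  exact Finset.sum_congr rfl fun _ _ => Finset.sum_congr rfl fun _ _ => by ring

theorem dotProduct_mulVec_self_le_maxEigR {k n : ℕ} (G : Matrix (Fin k) (Fin n) ℝ)
    (v : Fin n → ℝ) : (G *ᵥ v) ⬝ᵥ (G *ᵥ v) ≤ maxEigR (Gᵀ * G) * (v ⬝ᵥ v) := by
  have hA : (Gᵀ * G).IsHermitian := by simpa using isHermitian_conjTranspose_mul_self G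
  rw [maxEigR, dif_pos hA, dotProduct_mulVec_self_eq]
  exact hA.dotProduct_mulVec_le_iSup_eigenvalues v

theorem coded_linear_inverse_mse_bound_general
    {N k n : ℕ}
    (B CE : Matrix (Fin N) (Fin N) ℝ) (hCE : CE.PosSemidef)
    {Ω : Type*} [MeasurableSpace Ω] (μ : Measure Ω)
    (e : Fin k → Ω → Fin N → ℝ)
    (h_int : ∀ i j a b, Integrable (fun ω => e i ω a * e j ω b) μ)
    (h_cov : ∀ i j a b, ∫ ω, e i ω a * e j ω b ∂μ = if i = j then CE a b else 0)
    (G : Matrix (Fin k) (Fin n) ℝ) (hG : G.rank = k)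
    (l : Fin n → ℕ) (hl : ∀ i, 0 < (matC B CE (l i)).trace)
    (Λ : Matrix (Fin n) (Fin n) ℝ)
    (hΛ : Λ = Matrix.diagonal fun i => (matC B CE (l i)).trace)
    (L : Matrix (Fin k) (Fin n) ℝ)
    (hL : L = (G * Λ⁻¹ * Gᵀ)⁻¹ * G * Λ⁻¹)
    (ε : Fin n → Ω → Fin N → ℝ)
    (hε : ∀ i ω a, ε i ω a = ∑ j, G j i * e j ω a)
    (E : Ω → Matrix (Fin N) (Fin k) ℝ)
    (hE : ∀ ω a c, E ω a c = ∑ i, ((B ^ l i) *ᵥ ε i ω) a * L c i) :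
    (∫ ω, ∑ a, ∑ c, (E ω a c) ^ 2 ∂μ) ≤
        maxEigR (Gᵀ * G) * ((G * Λ⁻¹ * Gᵀ)⁻¹).trace ∧
    (G * Gᵀ = 1 →
      (∫ ω, ∑ a, ∑ c, (E ω a c) ^ 2 ∂μ) ≤ ((G * Λ⁻¹ * Gᵀ)⁻¹).trace) := by
  set Y := fun i => stackSmul (fun c => L c i) (B ^ l i)
  have hmse : ∫ ω, ∑ a, ∑ c, E ω a c ^ 2 ∂μ
      = ∑ j, ((∑ i, G j i • Y i) * CE * (∑ i, G j i • Y i)ᵀ).trace := by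
    simp_rw [decoded_error_eq_sum_mulVec _ G L hε hE, ← Fintype.sum_prod_type']
    exact integral_sum_sq_sum_mulVec h_int h_cov _
  have hΛpos : Λ.PosDef := hΛ ▸ PosDef.diagonal hl
  have htrace : ((G * Λ⁻¹ * Gᵀ)⁻¹).trace = ∑ i, (Y i * CE * (Y i)ᵀ).trace := by
    rw [← inv_mul_inv_mul_mul_transpose hΛpos.isUnit (by simp [hΛ])
      (hΛpos.mul_inv_mul_transpose (by simpa using hG)).isUnit, ← hL, hΛ,
      trace_mul_diagonal_mul_transpose]
    simp [Y, trace_stackSmul_mul_mul_transpose, matC, transpose_pow]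
  have hbound (σ : ℝ) (hσ : ∀ v, (G *ᵥ v) ⬝ᵥ (G *ᵥ v) ≤ σ * (v ⬝ᵥ v)) :
      ∫ ω, ∑ a, ∑ c, E ω a c ^ 2 ∂μ ≤ σ * ((G * Λ⁻¹ * Gᵀ)⁻¹).trace :=
    hmse ▸ htrace ▸ sum_trace_sum_smul_mul_mul_transpose_le hCE hσ Y
  exact ⟨hbound _ (dotProduct_mulVec_self_le_maxEigR G), fun hGG =>
    by simpa using hbound 1 (by simpa using dotProduct_mulVec_self_le_of_mul_transpose_eq_one hGG)⟩

/-- Theorem 1: MSE bound for the coded linear inverse algorithm.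
Uncorrelated mean-zero errors `e₁,…,e_k` with covariance `C_E`, generator matrix `G`
of rank `k`, per-worker iteration counts `l i` with `trace C(lᵢ) > 0`,
`Λ = diag(trace C(l₁),…,trace C(l_n))`, decoding matrix `L = (G Λ⁻¹ Gᵀ)⁻¹ G Λ⁻¹`,
encoded errors `εᵢ = Σ_j G_{ji} e_j`, decoded error matrix
`E = [B^{l₁} ε₁, …, B^{l_n} ε_n] · Lᵀ`.  Then
`E[‖E‖_F²] ≤ σ_max(GᵀG) · trace((G Λ⁻¹ Gᵀ)⁻¹)`, and if moreover `G Gᵀ = I_k` then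
`E[‖E‖_F²] ≤ trace((G Λ⁻¹ Gᵀ)⁻¹)`. -/
theorem coded_linear_inverse_mse_bound
    {N k n : ℕ} (hk : 0 < k) (hkn : k ≤ n)
    (B CE : Matrix (Fin N) (Fin N) ℝ) (hCE : CE.PosSemidef)
    {Ω : Type*} [MeasurableSpace Ω] (μ : Measure Ω) [IsProbabilityMeasure μ]
    (e : Fin k → Ω → Fin N → ℝ)
    (h_meas : ∀ i a, Measurable fun ω => e i ω a)
    (h_int : ∀ i j a b, Integrable (fun ω => e i ω a * e j ω b) μ)
    (h_mean : ∀ i a, ∫ ω, e i ω a ∂μ = 0)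
    (h_cov : ∀ i j a b, ∫ ω, e i ω a * e j ω b ∂μ = if i = j then CE a b else 0)
    (G : Matrix (Fin k) (Fin n) ℝ) (hG : G.rank = k)
    (l : Fin n → ℕ) (hl : ∀ i, 0 < (matC B CE (l i)).trace)
    (Λ : Matrix (Fin n) (Fin n) ℝ)
    (hΛ : Λ = Matrix.diagonal fun i => (matC B CE (l i)).trace)
    (L : Matrix (Fin k) (Fin n) ℝ)
    (hL : L = (G * Λ⁻¹ * Gᵀ)⁻¹ * G * Λ⁻¹)
    (ε : Fin n → Ω → Fin N → ℝ)
    (hε : ∀ i ω a, ε i ω a = ∑ j, G j i * e j ω a)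
    (E : Ω → Matrix (Fin N) (Fin k) ℝ)
    (hE : ∀ ω a c, E ω a c = ∑ i, ((B ^ l i) *ᵥ ε i ω) a * L c i) :
    (∫ ω, ∑ a, ∑ c, (E ω a c) ^ 2 ∂μ) ≤
        maxEigR (Gᵀ * G) * ((G * Λ⁻¹ * Gᵀ)⁻¹).trace ∧
    (G * Gᵀ = 1 →
      (∫ ω, ∑ a, ∑ c, (E ω a c) ^ 2 ∂μ) ≤ ((G * Λ⁻¹ * Gᵀ)⁻¹).trace) :=
  coded_linear_inverse_mse_bound_general B CE hCE μ e h_int h_cov G hG l hl Λ hΛ L hL ε hε E hE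
end

section
/- Let B be an N×N real matrix and C_E, C_cor be N×N real symmetric positive semidefinite matrices; for l ∈ ℕ set C(l) = B^l C_E (B^T)^l. Let e_1,…,e_k be random vectors in ℝ^N with E[e_i] = 0 and E[e_i e_j^T] = C_cor + δ_{ij} C_E for all i,j (stationary correlated inputs). Let G be a real k×n matrix (k ≤ n) of rank k and l_1,…,l_n ∈ ℕ. Define Λ = diag(trace(C(l_1)),…,trace(C(l_n))), the n×n matrix Ψ with entries Ψ_{ij} = trace(B^{l_i} C_cor (B^T)^{l_j}), the vector h = G^T 1_k ∈ ℝ^n (1_k the all-ones vector), and Λ̃ = σ_max(G^T G)·Λ + diag(h)·Ψ·diag(h)^T, where σ_max(G^T G) is the largest eigenvalue of G^T G. Assume Λ̃ is positive definite. Define the encoded errors ε_i = Σ_{j=1}^k G_{ji} e_j, the decoding matrix L̃ = (G Λ̃^{-1} G^T)^{-1} G Λ̃^{-1}, and the decoded error matrix E = [B^{l_1} ε_1, …, B^{l_n} ε_n] · L̃^T. Then E[‖E‖_F^2] ≤ trace((G Λ̃^{-1} G^T)^{-1}), where ‖·‖_F is the Frobenius norm. -/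
open MeasureTheory Matrix
open scoped BigOperators

/-!
Write `Mᵢ = B^{lᵢ} εᵢ`, so that `E = [M₁ ⋯ Mₙ] L̃ᵀ` and `‖E‖_F² = trace (L̃ (MᵀM) L̃ᵀ)`. The encoded
errors satisfy `𝔼[εᵢ εⱼᵀ] = hᵢ hⱼ C_cor + (GᵀG)ᵢⱼ C_E`, hence `𝔼 ‖E‖_F² = trace (L̃ W L̃ᵀ)` with
`W = diag(h) Ψ diag(h)ᵀ + (GᵀG) ⊙ Φ`, where `Φᵢⱼ = trace (B^{lᵢ} C_E (B^{lⱼ})ᵀ)` is positive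
semidefinite. Since `GᵀG ≤ σ_max(GᵀG) I`, the Schur product theorem gives
`(GᵀG) ⊙ Φ ≤ σ_max(GᵀG) (I ⊙ Φ) = σ_max(GᵀG) Λ`, i.e. `W ≤ Λ̃` in the Loewner order. Hence
`𝔼 ‖E‖_F² ≤ trace (L̃ Λ̃ L̃ᵀ)`, and for the weighted least-squares decoder `L̃` this is
`trace ((G Λ̃⁻¹ Gᵀ)⁻¹)`.
-/

open scoped MatrixOrder

namespace Matrix

variable {ι l m n : Type*} [Fintype ι] [Fintype m] [Fintype n]

-- Also true for singular `A`, where `A⁻¹ = 0`.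
lemma nonsing_inv_mul_mul_nonsing_inv [DecidableEq n] {α : Type*} [CommRing α]
    (A : Matrix n n α) : A⁻¹ * A * A⁻¹ = A⁻¹ := by
  rcases A.nonsing_inv_cancel_or_zero with ⟨h, -⟩ | h
  · rw [h, Matrix.one_mul]
  · rw [h, Matrix.zero_mul, Matrix.zero_mul]

noncomputable def wlsDecoder [DecidableEq m] [DecidableEq n] {α : Type*} [CommRing α]
    (G : Matrix m n α) (Λ : Matrix n n α) : Matrix m n α :=
  (G * Λ⁻¹ * Gᵀ)⁻¹ * G * Λ⁻¹

lemma wlsDecoder_mul_mul_transpose [DecidableEq m] [DecidableEq n] {α : Type*} [CommRing α]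
    (G : Matrix m n α) {Λ : Matrix n n α} (hΛ : Λᵀ = Λ) :
    wlsDecoder G Λ * Λ * (wlsDecoder G Λ)ᵀ = (G * Λ⁻¹ * Gᵀ)⁻¹ := by
  have hΛinv : Λ⁻¹ᵀ = Λ⁻¹ := by rw [transpose_nonsing_inv, hΛ]
  have hX : (G * Λ⁻¹ * Gᵀ)ᵀ = G * Λ⁻¹ * Gᵀ := by
    rw [transpose_mul, transpose_mul, transpose_transpose, hΛinv, Matrix.mul_assoc]
  have hXinv : (G * Λ⁻¹ * Gᵀ)⁻¹ᵀ = (G * Λ⁻¹ * Gᵀ)⁻¹ := by rw [transpose_nonsing_inv, hX]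
  calc wlsDecoder G Λ * Λ * (wlsDecoder G Λ)ᵀ
      = (G * Λ⁻¹ * Gᵀ)⁻¹ * (G * (Λ⁻¹ * Λ * Λ⁻¹) * Gᵀ) * (G * Λ⁻¹ * Gᵀ)⁻¹ := by
        rw [wlsDecoder, transpose_mul, transpose_mul, hΛinv, hXinv]
        simp only [Matrix.mul_assoc]
    _ = (G * Λ⁻¹ * Gᵀ)⁻¹ := by
        rw [nonsing_inv_mul_mul_nonsing_inv, nonsing_inv_mul_mul_nonsing_inv]

lemma IsHermitian.le_maxEigR_smul_one {k : ℕ} {A : Matrix (Fin k) (Fin k) ℝ}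
    (hA : A.IsHermitian) : A ≤ maxEigR A • 1 := by
  rw [← Algebra.algebraMap_eq_smul_one]
  refine le_algebraMap_of_spectrum_le (fun x hx => ?_) hA
  obtain ⟨i, rfl⟩ := hA.spectrum_real_eq_range_eigenvalues ▸ hx
  rw [maxEigR, dif_pos hA]
  exact le_ciSup (Set.finite_range _).bddAbove i

lemma IsHermitian.hadamard_le_maxEigR_smul {k : ℕ} {A Φ : Matrix (Fin k) (Fin k) ℝ}
    (hA : A.IsHermitian) (hΦ : Φ.PosSemidef) : A ⊙ Φ ≤ maxEigR A • diagonal Φ.diag := by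
  have h := (le_iff.mp hA.le_maxEigR_smul_one).hadamard hΦ
  rwa [show (maxEigR A • 1 - A) ⊙ Φ = maxEigR A • diagonal Φ.diag - A ⊙ Φ by
    ext i j
    by_cases hij : i = j <;> simp [hij, hadamard_apply, sub_mul]] at h

lemma PosSemidef.posSemidef_trace_mul_mul_transpose {C : Matrix m m ℝ} (hC : C.PosSemidef)
    (P : ι → Matrix n m ℝ) : (of fun i j => (P i * C * (P j)ᵀ).trace).PosSemidef := by
  have hCt : Cᵀ = C := by rw [← conjTranspose_eq_transpose_of_trivial]; exact hC.1
  refine .of_dotProduct_mulVec_nonneg ?_ fun x => ?_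
  · ext i j
    rw [conjTranspose_apply, star_trivial, of_apply, of_apply, ← trace_transpose,
      transpose_mul, transpose_mul, transpose_transpose, hCt, Matrix.mul_assoc]
  · have h := (hC.mul_mul_conjTranspose_same (∑ i, x i • P i)).trace_nonneg
    convert h using 1
    simp only [dotProduct, Pi.star_apply, star_trivial, mulVec, of_apply, Finset.mul_sum,
      Matrix.sum_mul, smul_mul, conjTranspose_eq_transpose_of_trivial, transpose_sum,
      transpose_smul, Matrix.mul_sum, Matrix.mul_smul, trace_sum, trace_smul, smul_eq_mul]
    rw [Finset.sum_comm]
    exact Finset.sum_congr rfl fun i _ => Finset.sum_congr rfl fun j _ => by ring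

lemma trace_mul_mul_transpose_le_of_le {W V : Matrix n n ℝ} (h : W ≤ V) (L : Matrix m n ℝ) :
    (L * W * Lᵀ).trace ≤ (L * V * Lᵀ).trace := by
  have h := ((le_iff.mp h).mul_mul_conjTranspose_same L).trace_nonneg
  rw [conjTranspose_eq_transpose_of_trivial, Matrix.mul_sub, Matrix.sub_mul, trace_sub] at h
  linarith

lemma sum_sq_mul_transpose [Fintype l] (M : Matrix l n ℝ) (L : Matrix m n ℝ) :
    ∑ a, ∑ c, (M * Lᵀ) a c ^ 2 = (L * (Mᵀ * M) * Lᵀ).trace := by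
  simp_rw [sq, ← hadamard_apply, sum_hadamard_eq, transpose_mul, transpose_transpose]
  rw [Matrix.mul_assoc, trace_mul_comm, Matrix.mul_assoc, Matrix.mul_assoc, trace_mul_comm,
    ← Matrix.mul_assoc]

end Matrix

section SecondMoments

variable {Ω ι ι' κ α : Type*} [MeasurableSpace Ω] {μ : Measure Ω}

lemma sum_mul_sum_eq_sum_sum [Fintype ι] [Fintype κ] (f : ι → ℝ) (g : κ → ℝ) (c : ι → ℝ)
    (d : κ → ℝ) : (∑ i, c i * f i) * ∑ j, d j * g j = ∑ i, ∑ j, c i * d j * (f i * g j) := by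
  simp_rw [Finset.sum_mul_sum, mul_mul_mul_comm]

lemma integrable_sum_mul_sum [Fintype ι] [Fintype κ] {f : ι → Ω → ℝ} {g : κ → Ω → ℝ}
    (hfg : ∀ i j, Integrable (fun ω => f i ω * g j ω) μ) (c : ι → ℝ) (d : κ → ℝ) :
    Integrable (fun ω => (∑ i, c i * f i ω) * ∑ j, d j * g j ω) μ := by
  simp_rw [sum_mul_sum_eq_sum_sum]
  exact integrable_finsetSum _ fun i _ => integrable_finsetSum _ fun j _ =>
    (hfg i j).const_mul _

lemma integral_sum_mul_sum [Fintype ι] [Fintype κ] {f : ι → Ω → ℝ} {g : κ → Ω → ℝ}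
    (hfg : ∀ i j, Integrable (fun ω => f i ω * g j ω) μ) (c : ι → ℝ) (d : κ → ℝ) :
    ∫ ω, (∑ i, c i * f i ω) * (∑ j, d j * g j ω) ∂μ =
      ∑ i, ∑ j, c i * d j * ∫ ω, f i ω * g j ω ∂μ := by
  simp_rw [sum_mul_sum_eq_sum_sum]
  rw [integral_finsetSum _ fun i _ => integrable_finsetSum _ fun j _ => (hfg i j).const_mul _]
  refine Finset.sum_congr rfl fun i _ => ?_
  rw [integral_finsetSum _ fun j _ => (hfg i j).const_mul _]
  simp_rw [integral_const_mul]

lemma integrable_mulVec_dotProduct_mulVec [Fintype κ] [Fintype α] {X Y : Ω → κ → ℝ}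
    (hXY : ∀ a b, Integrable (fun ω => X ω a * Y ω b) μ) (P Q : Matrix α κ ℝ) :
    Integrable (fun ω => (P *ᵥ X ω) ⬝ᵥ (Q *ᵥ Y ω)) μ :=
  integrable_finsetSum _ fun r _ => integrable_sum_mul_sum hXY (P r) (Q r)

lemma integral_mulVec_dotProduct_mulVec [Fintype κ] [Fintype α] {X Y : Ω → κ → ℝ}
    (hXY : ∀ a b, Integrable (fun ω => X ω a * Y ω b) μ) (P Q : Matrix α κ ℝ) :
    ∫ ω, (P *ᵥ X ω) ⬝ᵥ (Q *ᵥ Y ω) ∂μ =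
      (P * of (fun a b => ∫ ω, X ω a * Y ω b ∂μ) * Qᵀ).trace := by
  have hexpand : ∀ ω, (P *ᵥ X ω) ⬝ᵥ (Q *ᵥ Y ω) =
      ∑ r, (∑ a, P r a * X ω a) * ∑ b, Q r b * Y ω b := fun ω => rfl
  simp_rw [hexpand]
  rw [integral_finsetSum _ fun r _ => integrable_sum_mul_sum hXY (P r) (Q r)]
  simp_rw [integral_sum_mul_sum hXY]
  simp only [trace, diag, mul_apply, of_apply, transpose_apply, Finset.sum_mul]
  refine Finset.sum_congr rfl fun r _ => Finset.sum_comm.trans ?_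
  exact Finset.sum_congr rfl fun b _ => Finset.sum_congr rfl fun a _ => by ring

lemma integral_trace_mul_mul_transpose [Fintype ι] [Fintype κ] {F : Ω → Matrix ι ι ℝ}
    (hF : ∀ i j, Integrable (fun ω => F ω i j) μ) (L : Matrix κ ι ℝ) :
    ∫ ω, (L * F ω * Lᵀ).trace ∂μ = (L * of (fun i j => ∫ ω, F ω i j ∂μ) * Lᵀ).trace := by
  simp only [trace, diag, mul_apply, of_apply, transpose_apply]
  rw [integral_finsetSum _ fun c _ => integrable_finsetSum _ fun j _ =>
    (integrable_finsetSum _ fun i _ => (hF i j).const_mul (L c i)).mul_const (L c j)]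
  refine Finset.sum_congr rfl fun c _ => ?_
  rw [integral_finsetSum _ fun j _ =>
    (integrable_finsetSum _ fun i _ => (hF i j).const_mul (L c i)).mul_const (L c j)]
  refine Finset.sum_congr rfl fun j _ => ?_
  rw [integral_mul_const, integral_finsetSum _ fun i _ => (hF i j).const_mul (L c i)]
  simp_rw [integral_const_mul]

lemma integral_encoded_mul_encoded [Fintype ι] [DecidableEq ι]
    {e : ι → Ω → κ → ℝ} {Ccor CE : Matrix κ κ ℝ}
    (h_int : ∀ p q a b, Integrable (fun ω => e p ω a * e q ω b) μ)
    (h_cov : ∀ p q a b, ∫ ω, e p ω a * e q ω b ∂μ = Ccor a b + if p = q then CE a b else 0)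
    (G : Matrix ι ι' ℝ) (i j : ι') (a b : κ) :
    ∫ ω, (∑ p, G p i * e p ω a) * (∑ q, G q j * e q ω b) ∂μ =
      (∑ p, G p i) * (∑ q, G q j) * Ccor a b + (Gᵀ * G) i j * CE a b := by
  rw [integral_sum_mul_sum fun p q => h_int p q a b]
  simp_rw [h_cov, mul_add, Finset.sum_add_distrib, mul_ite, mul_zero, Finset.sum_ite_eq,
    Finset.mem_univ, if_true, Finset.sum_mul_sum, ← Finset.sum_mul, mul_apply, transpose_apply]

lemma integral_encoded_gram [Fintype ι] [DecidableEq ι] [Fintype κ] [Fintype α]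
    {e : ι → Ω → κ → ℝ} {Ccor CE : Matrix κ κ ℝ}
    (h_int : ∀ p q a b, Integrable (fun ω => e p ω a * e q ω b) μ)
    (h_cov : ∀ p q a b, ∫ ω, e p ω a * e q ω b ∂μ = Ccor a b + if p = q then CE a b else 0)
    (G : Matrix ι ι' ℝ) (P : ι' → Matrix α κ ℝ) (i j : ι') :
    ∫ ω, (P i *ᵥ fun a => ∑ p, G p i * e p ω a) ⬝ᵥ (P j *ᵥ fun b => ∑ q, G q j * e q ω b) ∂μ =
      (∑ p, G p i) * (∑ q, G q j) * (P i * Ccor * (P j)ᵀ).trace +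
        (Gᵀ * G) i j * (P i * CE * (P j)ᵀ).trace := by
  rw [integral_mulVec_dotProduct_mulVec (fun a b => integrable_sum_mul_sum
    (fun p q => h_int p q a b) _ _)]
  have hcov : (of fun a b => ∫ ω, (∑ p, G p i * e p ω a) * (∑ q, G q j * e q ω b) ∂μ) =
      ((∑ p, G p i) * (∑ q, G q j)) • Ccor + (Gᵀ * G) i j • CE := by
    ext a b
    rw [of_apply, integral_encoded_mul_encoded h_int h_cov]
    rfl
  rw [hcov, Matrix.mul_add, Matrix.add_mul, trace_add, Matrix.mul_smul, Matrix.smul_mul,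
    trace_smul, Matrix.mul_smul, Matrix.smul_mul, trace_smul, smul_eq_mul, smul_eq_mul]

end SecondMoments

theorem coded_linear_inverse_mse_bound_stationary_general
    {N k n : ℕ}
    (B CE Ccor : Matrix (Fin N) (Fin N) ℝ)
    (hCE : CE.PosSemidef)
    {Ω : Type*} [MeasurableSpace Ω] (μ : Measure Ω)
    (e : Fin k → Ω → Fin N → ℝ)
    (h_int : ∀ i j a b, Integrable (fun ω => e i ω a * e j ω b) μ)
    (h_cov : ∀ i j a b, ∫ ω, e i ω a * e j ω b ∂μ =
      Ccor a b + if i = j then CE a b else 0)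
    (G : Matrix (Fin k) (Fin n) ℝ)
    (l : Fin n → ℕ)
    (Λ : Matrix (Fin n) (Fin n) ℝ)
    (hΛ : Λ = Matrix.diagonal fun i => (matC B CE (l i)).trace)
    (Ψ : Matrix (Fin n) (Fin n) ℝ)
    (hΨ : ∀ i j, Ψ i j = (B ^ l i * Ccor * (Bᵀ) ^ l j).trace)
    (h1 : Fin n → ℝ) (hh1 : ∀ i, h1 i = ∑ j, G j i)
    (Λt : Matrix (Fin n) (Fin n) ℝ)
    (hΛt : Λt = maxEigR (Gᵀ * G) • Λ +
      Matrix.diagonal h1 * Ψ * (Matrix.diagonal h1)ᵀ)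
    (hΛt_pd : Λt.PosDef)
    (L : Matrix (Fin k) (Fin n) ℝ)
    (hL : L = (G * Λt⁻¹ * Gᵀ)⁻¹ * G * Λt⁻¹)
    (ε : Fin n → Ω → Fin N → ℝ)
    (hε : ∀ i ω a, ε i ω a = ∑ j, G j i * e j ω a)
    (E : Ω → Matrix (Fin N) (Fin k) ℝ)
    (hE : ∀ ω a c, E ω a c = ∑ i, ((B ^ l i) *ᵥ ε i ω) a * L c i) :
    (∫ ω, ∑ a, ∑ c, (E ω a c) ^ 2 ∂μ) ≤ ((G * Λt⁻¹ * Gᵀ)⁻¹).trace := by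
  obtain rfl : ε = fun i ω a => ∑ j, G j i * e j ω a := funext₃ hε
  set P : Fin n → Matrix (Fin N) (Fin N) ℝ := fun i => B ^ l i
  set M : Ω → Matrix (Fin N) (Fin n) ℝ :=
    fun ω => of fun a i => (P i *ᵥ fun b => ∑ p, G p i * e p ω b) a
  set Φ : Matrix (Fin n) (Fin n) ℝ := of fun i j => (P i * CE * (P j)ᵀ).trace
  set W : Matrix (Fin n) (Fin n) ℝ := of fun i j => ∫ ω, ((M ω)ᵀ * M ω) i j ∂μ
  have hEM : ∀ ω, E ω = M ω * Lᵀ := fun ω => by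
    ext a c
    simp [hE, mul_apply, M, P]
  have hW : W = diagonal h1 * Ψ * (diagonal h1)ᵀ + (Gᵀ * G) ⊙ Φ := by
    ext i j
    refine (integral_encoded_gram h_int h_cov G P i j).trans ?_
    simp only [Matrix.add_apply, diagonal_transpose, mul_diagonal, diagonal_mul, hadamard_apply,
      hΨ, hh1, Φ, of_apply, P, transpose_pow]
    ring
  have hΛ_diag : Λ = diagonal Φ.diag := by
    simp [hΛ, matC, Φ, P, transpose_pow]
  have hW_le : W ≤ Λt := by
    rw [hW, hΛt, hΛ_diag, add_comm (maxEigR (Gᵀ * G) • _)]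
    have hGG : (Gᵀ * G).IsHermitian := by simpa using isHermitian_conjTranspose_mul_self G
    exact add_le_add_right (hGG.hadamard_le_maxEigR_smul
      (hCE.posSemidef_trace_mul_mul_transpose P)) _
  have hΛt_symm : Λtᵀ = Λt := by
    rw [← conjTranspose_eq_transpose_of_trivial]; exact hΛt_pd.1
  calc ∫ ω, ∑ a, ∑ c, E ω a c ^ 2 ∂μ = ∫ ω, (L * ((M ω)ᵀ * M ω) * Lᵀ).trace ∂μ := by
        simp_rw [hEM, sum_sq_mul_transpose]
    _ = (L * W * Lᵀ).trace := integral_trace_mul_mul_transpose (fun i j =>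
        integrable_mulVec_dotProduct_mulVec
          (fun a b => integrable_sum_mul_sum (fun p q => h_int p q a b) _ _) _ _) L
    _ ≤ (L * Λt * Lᵀ).trace := trace_mul_mul_transpose_le_of_le hW_le L
    _ = _ := by rw [hL]; exact congrArg trace (wlsDecoder_mul_mul_transpose G hΛt_symm)

/-- Theorem 2: MSE bound for stationary correlated inputs.
Errors `e₁,…,e_k` with mean zero and `E[eᵢ eⱼᵀ] = C_cor + δᵢⱼ C_E`; generator matrix `G`
of rank `k`; `Λ = diag(trace C(lᵢ))`; `Ψᵢⱼ = trace(B^{lᵢ} C_cor (Bᵀ)^{lⱼ})`;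
`h = Gᵀ 1_k`; `Λ̃ = σ_max(GᵀG)·Λ + diag(h)·Ψ·diag(h)ᵀ` assumed positive definite;
decoder `L̃ = (G Λ̃⁻¹ Gᵀ)⁻¹ G Λ̃⁻¹`; decoded error `E = [B^{l₁} ε₁,…,B^{l_n} ε_n]·L̃ᵀ`
with `εᵢ = Σ_j G_{ji} e_j`.  Then `E[‖E‖_F²] ≤ trace((G Λ̃⁻¹ Gᵀ)⁻¹)`. -/
theorem coded_linear_inverse_mse_bound_stationary
    {N k n : ℕ} (hk : 0 < k) (hkn : k ≤ n)
    (B CE Ccor : Matrix (Fin N) (Fin N) ℝ)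
    (hCE : CE.PosSemidef) (hCcor : Ccor.PosSemidef)
    {Ω : Type*} [MeasurableSpace Ω] (μ : Measure Ω) [IsProbabilityMeasure μ]
    (e : Fin k → Ω → Fin N → ℝ)
    (h_meas : ∀ i a, Measurable fun ω => e i ω a)
    (h_int : ∀ i j a b, Integrable (fun ω => e i ω a * e j ω b) μ)
    (h_mean : ∀ i a, ∫ ω, e i ω a ∂μ = 0)
    (h_cov : ∀ i j a b, ∫ ω, e i ω a * e j ω b ∂μ =
      Ccor a b + if i = j then CE a b else 0)
    (G : Matrix (Fin k) (Fin n) ℝ) (hG : G.rank = k)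
    (l : Fin n → ℕ)
    (Λ : Matrix (Fin n) (Fin n) ℝ)
    (hΛ : Λ = Matrix.diagonal fun i => (matC B CE (l i)).trace)
    (Ψ : Matrix (Fin n) (Fin n) ℝ)
    (hΨ : ∀ i j, Ψ i j = (B ^ l i * Ccor * (Bᵀ) ^ l j).trace)
    (h1 : Fin n → ℝ) (hh1 : ∀ i, h1 i = ∑ j, G j i)
    (Λt : Matrix (Fin n) (Fin n) ℝ)
    (hΛt : Λt = maxEigR (Gᵀ * G) • Λ +
      Matrix.diagonal h1 * Ψ * (Matrix.diagonal h1)ᵀ)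
    (hΛt_pd : Λt.PosDef)
    (L : Matrix (Fin k) (Fin n) ℝ)
    (hL : L = (G * Λt⁻¹ * Gᵀ)⁻¹ * G * Λt⁻¹)
    (ε : Fin n → Ω → Fin N → ℝ)
    (hε : ∀ i ω a, ε i ω a = ∑ j, G j i * e j ω a)
    (E : Ω → Matrix (Fin N) (Fin k) ℝ)
    (hE : ∀ ω a c, E ω a c = ∑ i, ((B ^ l i) *ᵥ ε i ω) a * L c i) :
    (∫ ω, ∑ a, ∑ c, (E ω a c) ^ 2 ∂μ) ≤ ((G * Λt⁻¹ * Gᵀ)⁻¹).trace :=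
  coded_linear_inverse_mse_bound_stationary_general B CE Ccor hCE μ e h_int h_cov G l Λ hΛ Ψ hΨ h1
    hh1 Λt hΛt hΛt_pd L hL ε hε E hE
end

section
/- Let n ≥ 1, 1 ≤ k < n, and w = exp(−2πi/n). Let s_0,…,s_{n−1} be independent real random variables, each with mean μ and variance v, and define s̃_p = (1/n) Σ_{j=0}^{n−1} w^{−pj} s_j for p ∈ ℤ (so s̃_{p+n} = s̃_p). Let J_4 be the (n−k)×(n−k) Hermitian Toeplitz matrix with entries (J_4)_{a,b} = s̃_{b−a} for 0 ≤ a,b ≤ n−k−1 (the lower-right block of F Λ F^H for F the n×n unitary DFT matrix and Λ = diag(s_0,…,s_{n−1})), and let σ_max(J_4) denote its largest eigenvalue. Then for every ε > 0, P(σ_max(J_4) > μ + ε) ≤ (2(n−k) − 1)^2 · v / (n · ε^2). -/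
open MeasureTheory ProbabilityTheory Matrix Complex
open scoped BigOperators

/-- largest eigenvalue of a complex Hermitian matrix. -/
noncomputable def maxEigC {m : ℕ} (A : Matrix (Fin m) (Fin m) ℂ) : ℝ :=
  if h : A.IsHermitian then ⨆ i, h.eigenvalues i else 0

/-! For `|q| < n` the expectation of `s̃_q` is `μ` at `q = 0` and `0` otherwise (sums of roots
of unity), so `J₄ - μ I` is the Toeplitz matrix of the centred coefficients `t_q = s̃_q - E s̃_q`,
and Gershgorin gives `σ_max(J₄) ≤ μ + Y` with `Y = ∑_{|q| < n - k} |t_q|`. Each `t_q` is a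
combination of the independent centred `s_j` with weights of modulus `1/n`, so `E |t_q|² = v / n`;
Cauchy–Schwarz over the `2(n - k) - 1` terms gives `E Y² ≤ (2(n - k) - 1)² v / n`, and Markov's
inequality for `Y²` concludes. -/

theorem maxEigC_le_of_forall_sum_norm_sub_smul_one_le {m : ℕ} [NeZero m]
    {A : Matrix (Fin m) (Fin m) ℂ} (hA : A.IsHermitian) (c R : ℝ)
    (hR : ∀ a, ∑ b, ‖(A - (c : ℂ) • 1) a b‖ ≤ R) :
    maxEigC A ≤ c + R := by
  rw [maxEigC, dif_pos hA]
  refine ciSup_le fun i => ?_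
  set ev := hA.eigenvalues i
  have hev : Module.End.HasEigenvalue (toLin' A) (ev : ℂ) :=
    .of_mem_spectrum <| by
      rw [spectrum_toLin']
      exact spectrum.algebraMap_mem ℂ (hA.eigenvalues_mem_spectrum_real i)
  obtain ⟨a, ha⟩ := eigenvalue_mem_ball hev
  rw [Metric.mem_closedBall, dist_eq_norm] at ha
  have hrow : ∑ b, ‖(A - (c : ℂ) • 1) a b‖ =
      ‖A a a - c‖ + ∑ b ∈ Finset.univ.erase a, ‖A a b‖ := by
    rw [← Finset.add_sum_erase _ _ (Finset.mem_univ a)]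
    congr 1
    · simp
    · refine Finset.sum_congr rfl fun b hb => ?_
      simp [one_apply_ne' (Finset.ne_of_mem_erase hb)]
  calc ev = c + ((ev : ℂ) - c).re := by simp
    _ ≤ c + ‖(ev : ℂ) - c‖ := by gcongr; exact re_le_norm _
    _ ≤ c + (‖(ev : ℂ) - A a a‖ + ‖A a a - c‖) := by
      gcongr; exact norm_sub_le_norm_sub_add_norm_sub _ _ _
    _ ≤ c + R := by linarith [hR a]

section Toeplitz

variable {m : ℕ} {A : Matrix (Fin m) (Fin m) ℂ} (t : ℤ → ℂ)

theorem maxEigC_le_of_sub_smul_one_eq_toeplitz [NeZero m] (hA : A.IsHermitian) (c : ℝ)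
    (hAt : ∀ a b : Fin m, (A - (c : ℂ) • 1) a b = t (a - b)) :
    maxEigC A ≤ c + ∑ q ∈ Finset.Ioo (-(m : ℤ)) m, ‖t q‖ := by
  refine maxEigC_le_of_forall_sum_norm_sub_smul_one_le hA c _ fun a => ?_
  have hinj : Set.InjOn (fun b : Fin m => (a : ℤ) - b) (Finset.univ : Finset (Fin m)) :=
    fun b _ b' _ h => by simpa [Fin.ext_iff] using h
  have hsub : Finset.univ.image (fun b : Fin m => (a : ℤ) - b) ⊆ Finset.Ioo (-(m : ℤ)) m := by
    intro q hq
    obtain ⟨b, -, rfl⟩ := Finset.mem_image.1 hq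
    simp only [Finset.mem_Ioo]
    omega
  simp only [hAt]
  rw [← Finset.sum_image (f := fun q => ‖t q‖) hinj]
  exact Finset.sum_le_sum_of_subset_of_nonneg hsub fun _ _ _ => norm_nonneg _

theorem isHermitian_of_toeplitz (ht : ∀ q, star (t q) = t (-q))
    (hAt : ∀ a b : Fin m, A a b = t (a - b)) : A.IsHermitian :=
  IsHermitian.ext fun a b => by rw [hAt, hAt, ht, neg_sub]

end Toeplitz

theorem Int.card_Ioo_neg_natCast (m : ℕ) : (Finset.Ioo (-(m : ℤ)) m).card = 2 * m - 1 := by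
  simp only [Int.card_Ioo]
  omega

theorem isPrimitiveRoot_exp_neg {n : ℕ} (hn : n ≠ 0) :
    IsPrimitiveRoot (exp (-2 * Real.pi * I / n)) n := by
  rw [show -2 * Real.pi * I / n = -(2 * Real.pi * I / n) by ring, exp_neg]
  exact (isPrimitiveRoot_exp n hn).inv

theorem IsPrimitiveRoot.sum_zpow_mul {ζ : ℂ} {n : ℕ} (hζ : IsPrimitiveRoot ζ n) (p : ℤ) :
    ∑ j : Fin n, ζ ^ (p * j) = if (n : ℤ) ∣ p then (n : ℂ) else 0 := by
  simp only [_root_.zpow_mul, zpow_natCast]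
  split_ifs with hp
  · simp [(hζ.zpow_eq_one_iff_dvd p).2 hp]
  · have hne : ζ ^ p ≠ 1 := mt (hζ.zpow_eq_one_iff_dvd p).1 hp
    have hpow : (ζ ^ p) ^ n = 1 := by
      rw [← zpow_natCast, ← _root_.zpow_mul, mul_comm, _root_.zpow_mul, zpow_natCast,
        hζ.pow_eq_one, _root_.one_zpow]
    rw [Fin.sum_univ_eq_sum_range (fun j => (ζ ^ p) ^ j), geom_sum_eq hne, hpow, sub_self,
      zero_div]

/-- The paper's `s̃_p` is `dftCoeff w s (-p)`. -/
noncomputable def dftCoeff {n : ℕ} (ζ : ℂ) (x : Fin n → ℝ) (p : ℤ) : ℂ :=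
  (n : ℂ)⁻¹ * ∑ j : Fin n, ζ ^ (p * j) * x j

section DFT

variable {n : ℕ} {ζ : ℂ}

theorem dftCoeff_eq_sum (x : Fin n → ℝ) (p : ℤ) :
    dftCoeff ζ x p = ∑ j : Fin n, (n : ℂ)⁻¹ * ζ ^ (p * j) * x j := by
  simp only [dftCoeff, Finset.mul_sum, mul_assoc]

theorem IsPrimitiveRoot.dftCoeff_sub_const (hζ : IsPrimitiveRoot ζ n) (hn : n ≠ 0)
    (x : Fin n → ℝ) (c : ℝ) (p : ℤ) :
    dftCoeff ζ x p = dftCoeff ζ (fun j => x j - c) p + if (n : ℤ) ∣ p then (c : ℂ) else 0 := by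
  have hsplit : ∑ j : Fin n, ζ ^ (p * j) * x j =
      ∑ j : Fin n, ζ ^ (p * j) * ((x j - c : ℝ) : ℂ) + (∑ j : Fin n, ζ ^ (p * j)) * c := by
    rw [Finset.sum_mul, ← Finset.sum_add_distrib]
    exact Finset.sum_congr rfl fun j _ => by push_cast; ring
  rw [dftCoeff, dftCoeff, hsplit, hζ.sum_zpow_mul, mul_add]
  congr 1
  split_ifs <;> simp [Nat.cast_ne_zero.2 hn]

theorem IsPrimitiveRoot.dftCoeff_sub_ite_of_abs_lt (hζ : IsPrimitiveRoot ζ n)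
    (x : Fin n → ℝ) (c : ℝ) {p : ℤ} (hp : |p| < n) :
    dftCoeff ζ x p - (if p = 0 then (c : ℂ) else 0) = dftCoeff ζ (fun j => x j - c) p := by
  have hn : n ≠ 0 := by rintro rfl; exact (abs_nonneg p).not_gt (by simpa using hp)
  have hdvd : (n : ℤ) ∣ p ↔ p = 0 :=
    ⟨fun h => Int.eq_zero_of_abs_lt_dvd h hp, fun h => h ▸ dvd_zero _⟩
  simp only [hζ.dftCoeff_sub_const hn x c p, hdvd, add_sub_cancel_right]

theorem star_dftCoeff (hζ : ‖ζ‖ = 1) (x : Fin n → ℝ) (p : ℤ) :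
    star (dftCoeff ζ x p) = dftCoeff ζ x (-p) := by
  have hstar : star ζ = ζ⁻¹ := (inv_eq_conj hζ).symm
  simp [dftCoeff, hstar, neg_mul, _root_.inv_zpow']

end DFT

section SecondMoment

variable {Ω ι : Type*} [MeasurableSpace Ω] {P : Measure Ω}

theorem integral_sq_sum_le_card_mul_sum_integral_sq {s : Finset ι} {f : ι → Ω → ℝ}
    (hf : ∀ i ∈ s, MemLp (f i) 2 P) :
    ∫ ω, (∑ i ∈ s, f i ω) ^ 2 ∂P ≤ s.card * ∑ i ∈ s, ∫ ω, f i ω ^ 2 ∂P := by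
  rw [← integral_finsetSum _ fun i hi => (hf i hi).integrable_sq, ← integral_const_mul]
  exact integral_mono (memLp_finsetSum s hf).integrable_sq
    ((integrable_finsetSum _ fun i hi => (hf i hi).integrable_sq).const_mul _)
    fun ω => sq_sum_le_card_mul_sum_sq

theorem meas_ge_le_ofReal_integral_sq_div_sq [IsFiniteMeasure P] {Y : Ω → ℝ}
    (hY : Integrable (fun ω => Y ω ^ 2) P) {ε : ℝ} (hε : 0 < ε) :
    P {ω | ε ≤ Y ω} ≤ ENNReal.ofReal ((∫ ω, Y ω ^ 2 ∂P) / ε ^ 2) := by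
  have hsub : {ω | ε ≤ Y ω} ⊆ {ω | ε ^ 2 ≤ Y ω ^ 2} := fun ω (hω : ε ≤ Y ω) =>
    pow_le_pow_left₀ hε.le hω 2
  have hmarkov :=
    mul_meas_ge_le_integral_of_nonneg (.of_forall fun ω => sq_nonneg (Y ω)) hY (ε ^ 2)
  calc P {ω | ε ≤ Y ω} ≤ P {ω | ε ^ 2 ≤ Y ω ^ 2} := measure_mono hsub
    _ = ENNReal.ofReal (P.real {ω | ε ^ 2 ≤ Y ω ^ 2}) :=
      (ofReal_measureReal (measure_ne_top _ _)).symm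
    _ ≤ ENNReal.ofReal ((∫ ω, Y ω ^ 2 ∂P) / ε ^ 2) := by
      gcongr
      rw [le_div_iff₀ (by positivity), mul_comm]
      exact hmarkov

theorem meas_sum_norm_ge_le {E : Type*} [NormedAddCommGroup E] [IsFiniteMeasure P]
    (s : Finset ι) {Z : ι → Ω → E} (hZ : ∀ i, MemLp (Z i) 2 P) {σ2 : ℝ}
    (hσ2 : ∀ i, ∫ ω, ‖Z i ω‖ ^ 2 ∂P = σ2) {ε : ℝ} (hε : 0 < ε) :
    P {ω | ε ≤ ∑ i ∈ s, ‖Z i ω‖} ≤ ENNReal.ofReal (s.card ^ 2 * σ2 / ε ^ 2) := by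
  refine (meas_ge_le_ofReal_integral_sq_div_sq
    (memLp_finsetSum s fun i _ => (hZ i).norm).integrable_sq hε).trans ?_
  gcongr
  calc ∫ ω, (∑ i ∈ s, ‖Z i ω‖) ^ 2 ∂P ≤ s.card * ∑ i ∈ s, ∫ ω, ‖Z i ω‖ ^ 2 ∂P :=
        integral_sq_sum_le_card_mul_sum_integral_sq fun i _ => (hZ i).norm
    _ = s.card ^ 2 * σ2 := by simp only [hσ2, Finset.sum_const, nsmul_eq_mul]; ring

theorem memLp_dftCoeff {n : ℕ} (ζ : ℂ) {x : Fin n → Ω → ℝ} (hx : ∀ j, MemLp (x j) 2 P)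
    (p : ℤ) : MemLp (fun ω => dftCoeff ζ (x · ω) p) 2 P := by
  simp only [dftCoeff_eq_sum]
  exact memLp_finsetSum _ fun j _ => (hx j).ofReal.const_mul _

variable [IsProbabilityMeasure P] [Fintype ι] {X : ι → Ω → ℝ}

theorem integral_sq_sum_mul_sub_integral (hX : ∀ i, MemLp (X i) 2 P)
    (hindep : Pairwise fun i j => IndepFun (X i) (X j) P) (c : ι → ℝ) :
    ∫ ω, (∑ i, c i * (X i ω - P[X i])) ^ 2 ∂P = ∑ i, c i ^ 2 * Var[X i; P] := by
  set Y : ι → Ω → ℝ := fun i ω => c i * (X i ω - P[X i])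
  have hY : ∀ i, MemLp (Y i) 2 P := fun i => ((hX i).sub (memLp_const _)).const_mul (c i)
  have hY_indep : Pairwise fun i j => IndepFun (Y i) (Y j) P := fun i j hij =>
    (hindep hij).comp ((measurable_id.sub_const _).const_mul _)
      ((measurable_id.sub_const _).const_mul _)
  have hY_mean : P[∑ i, Y i] = 0 := by
    simp only [Finset.sum_apply]
    rw [integral_finsetSum _ fun i _ => (hY i).integrable one_le_two]
    refine Finset.sum_eq_zero fun i _ => ?_
    simp [Y, integral_const_mul, integral_sub ((hX i).integrable one_le_two)]
  have hvar := variance_of_integral_eq_zero (memLp_finsetSum' _ fun i _ => hY i).aemeasurable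
    hY_mean
  simp only [Finset.sum_apply] at hvar
  rw [← hvar, IndepFun.variance_sum (fun i _ => hY i) fun i _ j _ hij => hY_indep hij]
  refine Finset.sum_congr rfl fun i _ => ?_
  rw [variance_const_mul, variance_sub_const (hX i).aestronglyMeasurable]

theorem integral_norm_sq_sum_mul_sub_integral (hX : ∀ i, MemLp (X i) 2 P)
    (hindep : Pairwise fun i j => IndepFun (X i) (X j) P) (a : ι → ℂ) :
    ∫ ω, ‖∑ i, a i * ((X i ω - P[X i] : ℝ) : ℂ)‖ ^ 2 ∂P = ∑ i, ‖a i‖ ^ 2 * Var[X i; P] := by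
  have hint : ∀ c : ι → ℝ, Integrable (fun ω => (∑ i, c i * (X i ω - P[X i])) ^ 2) P :=
    fun c => (memLp_finsetSum _ fun i _ =>
      ((hX i).sub (memLp_const _)).const_mul (c i)).integrable_sq
  have hnorm : ∀ ω, ‖∑ i, a i * ((X i ω - P[X i] : ℝ) : ℂ)‖ ^ 2 =
      (∑ i, (a i).re * (X i ω - P[X i])) ^ 2 + (∑ i, (a i).im * (X i ω - P[X i])) ^ 2 := by
    intro ω
    rw [Complex.sq_norm, normSq_apply, re_sum, im_sum]
    simp only [re_mul_ofReal, im_mul_ofReal]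
    ring
  simp_rw [hnorm]
  rw [integral_add (hint _) (hint _), integral_sq_sum_mul_sub_integral hX hindep,
    integral_sq_sum_mul_sub_integral hX hindep, ← Finset.sum_add_distrib]
  refine Finset.sum_congr rfl fun i _ => ?_
  rw [← add_mul, Complex.sq_norm, normSq_apply, sq, sq]

theorem integral_norm_sq_dftCoeff_sub {n : ℕ} {ζ : ℂ} (hζ : ‖ζ‖ = 1) {s : Fin n → Ω → ℝ}
    (hs : ∀ j, MemLp (s j) 2 P) (hindep : Pairwise fun i j => IndepFun (s i) (s j) P)
    {μ v : ℝ} (hmean : ∀ j, P[s j] = μ) (hvar : ∀ j, Var[s j; P] = v) (p : ℤ) :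
    ∫ ω, ‖dftCoeff ζ (fun j => s j ω - μ) p‖ ^ 2 ∂P = v / n := by
  have h := integral_norm_sq_sum_mul_sub_integral hs hindep fun j => (n : ℂ)⁻¹ * ζ ^ (p * j)
  simp only [hmean, hvar, norm_mul, norm_inv, norm_zpow, hζ, _root_.one_zpow, mul_one,
    Complex.norm_natCast, Finset.sum_const, Finset.card_univ, Fintype.card_fin,
    nsmul_eq_mul] at h
  simp only [dftCoeff_eq_sum, h]
  rcases eq_or_ne n 0 with rfl | hn
  · simp
  · field_simp

end SecondMoment

theorem toeplitz_block_max_eigenvalue_concentration_general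
    {n k : ℕ} (hkn : k < n)
    (w : ℂ) (hw : w = Complex.exp (-2 * Real.pi * Complex.I / n))
    {Ω : Type*} [MeasurableSpace Ω] (P : Measure Ω) [IsProbabilityMeasure P]
    (s : Fin n → Ω → ℝ)
    (hs_meas : ∀ j, Measurable (s j))
    (hs_indep : iIndepFun s P)
    (μ v : ℝ)
    (hs_sq_int : ∀ j, Integrable (fun ω => (s j ω) ^ 2) P)
    (hs_mean : ∀ j, ∫ ω, s j ω ∂P = μ)
    (hs_var : ∀ j, ∫ ω, (s j ω - μ) ^ 2 ∂P = v)
    (stil : ℤ → Ω → ℂ)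
    (hstil : ∀ (p : ℤ) (ω : Ω),
      stil p ω = (1 / (n : ℂ)) * ∑ j : Fin n, w ^ (-p * (j.val : ℤ)) * (s j ω : ℂ))
    (J4 : Ω → Matrix (Fin (n - k)) (Fin (n - k)) ℂ)
    (hJ4 : ∀ (ω : Ω) (a b : Fin (n - k)), J4 ω a b = stil ((b.val : ℤ) - (a.val : ℤ)) ω) :
    ∀ ε : ℝ, 0 < ε →
      P {ω | μ + ε < maxEigC (J4 ω)} ≤
        ENNReal.ofReal ((2 * ((n : ℝ) - k) - 1) ^ 2 * v / (n * ε ^ 2)) := by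
  intro ε hε
  have hn : n ≠ 0 := by omega
  have : NeZero (n - k) := ⟨by omega⟩
  have hζ : IsPrimitiveRoot w n := hw ▸ isPrimitiveRoot_exp_neg hn
  have hw_norm : ‖w‖ = 1 := hζ.norm'_eq_one hn
  have hs_L2 (j : Fin n) : MemLp (s j) 2 P :=
    (memLp_two_iff_integrable_sq (hs_meas j).aestronglyMeasurable).2 (hs_sq_int j)
  have hs_variance (j : Fin n) : Var[s j; P] = v := by
    rw [variance_eq_integral (hs_meas j).aemeasurable, hs_mean, hs_var]
  have hJ4_dft (ω : Ω) (a b : Fin (n - k)) : J4 ω a b = dftCoeff w (s · ω) (a - b) := by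
    rw [hJ4, hstil, one_div, neg_sub]; rfl
  have hJ4_sub (ω : Ω) (a b : Fin (n - k)) :
      (J4 ω - (μ : ℂ) • 1) a b = dftCoeff w (fun j => s j ω - μ) (a - b) := by
    rw [Matrix.sub_apply, Matrix.smul_apply, one_apply, hJ4_dft,
      ← hζ.dftCoeff_sub_ite_of_abs_lt _ _ (p := a - b) (abs_lt.2 ⟨by omega, by omega⟩)]
    simp [sub_eq_zero, Fin.ext_iff]
  calc P {ω | μ + ε < maxEigC (J4 ω)}
      ≤ P {ω | ε ≤ ∑ q ∈ Finset.Ioo (-((n - k : ℕ) : ℤ)) (n - k : ℕ),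
          ‖dftCoeff w (fun j => s j ω - μ) q‖} := by
        refine measure_mono fun ω (hω : μ + ε < _) => show ε ≤ _ from ?_
        have hHerm := isHermitian_of_toeplitz _ (star_dftCoeff hw_norm _) (hJ4_dft ω)
        linarith [maxEigC_le_of_sub_smul_one_eq_toeplitz _ hHerm μ (hJ4_sub ω)]
    _ ≤ _ := meas_sum_norm_ge_le _ (memLp_dftCoeff w fun j => (hs_L2 j).sub (memLp_const μ))
        (integral_norm_sq_dftCoeff_sub hw_norm hs_L2
          (fun _ _ hij => hs_indep.indepFun hij) hs_mean hs_variance) hε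
    _ = _ := by
        rw [Int.card_Ioo_neg_natCast, Nat.cast_sub (by omega), Nat.cast_mul, Nat.cast_sub hkn.le]
        congr 1
        field_simp
        ring

/-- equation (110): concentration of the largest eigenvalue of the
Toeplitz block `J₄`.  With independent real random variables `s₀,…,s_{n-1}` of mean `μ`
and variance `v`, DFT coefficients `s̃_p = (1/n) Σ_j w^{-pj} s_j`, and
`J₄` the `(n-k) × (n-k)` Hermitian Toeplitz matrix with entries `(J₄)_{a,b} = s̃_{b-a}`,
for every `ε > 0`, `P(σ_max(J₄) > μ + ε) ≤ (2(n-k) - 1)² v / (n ε²)`. -/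
theorem toeplitz_block_max_eigenvalue_concentration
    {n k : ℕ} (hn : 1 ≤ n) (hk : 1 ≤ k) (hkn : k < n)
    (w : ℂ) (hw : w = Complex.exp (-2 * Real.pi * Complex.I / n))
    {Ω : Type*} [MeasurableSpace Ω] (P : Measure Ω) [IsProbabilityMeasure P]
    (s : Fin n → Ω → ℝ)
    (hs_meas : ∀ j, Measurable (s j))
    (hs_indep : iIndepFun s P)
    (μ v : ℝ)
    (hs_int : ∀ j, Integrable (s j) P)
    (hs_sq_int : ∀ j, Integrable (fun ω => (s j ω) ^ 2) P)
    (hs_mean : ∀ j, ∫ ω, s j ω ∂P = μ)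
    (hs_var : ∀ j, ∫ ω, (s j ω - μ) ^ 2 ∂P = v)
    (stil : ℤ → Ω → ℂ)
    (hstil : ∀ (p : ℤ) (ω : Ω),
      stil p ω = (1 / (n : ℂ)) * ∑ j : Fin n, w ^ (-p * (j.val : ℤ)) * (s j ω : ℂ))
    (J4 : Ω → Matrix (Fin (n - k)) (Fin (n - k)) ℂ)
    (hJ4 : ∀ (ω : Ω) (a b : Fin (n - k)), J4 ω a b = stil ((b.val : ℤ) - (a.val : ℤ)) ω) :
    ∀ ε : ℝ, 0 < ε →
      P {ω | μ + ε < maxEigC (J4 ω)} ≤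
        ENNReal.ofReal ((2 * ((n : ℝ) - k) - 1) ^ 2 * v / (n * ε ^ 2)) :=
  toeplitz_block_max_eigenvalue_concentration_general hkn w hw P s hs_meas hs_indep μ v hs_sq_int
    hs_mean hs_var stil hstil J4 hJ4
end

section
/- Let B = P Θ P^{-1} be an N×N real matrix with P invertible and Θ = diag(γ_1,…,γ_N) a real diagonal matrix, and let C_E be an N×N real symmetric positive definite matrix. Let e_max and e_min denote the largest and smallest eigenvalues of the symmetric positive definite matrix P^{-1} C_E (P^{-1})^T, and let c_max and c_min denote the largest and smallest eigenvalues of P^T P. Then for every l ∈ ℕ, c_min · e_min · Σ_{j=1}^N γ_j^{2l} ≤ trace(B^l C_E (B^T)^l) ≤ c_max · e_max · Σ_{j=1}^N γ_j^{2l}. -/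
open Matrix
open scoped BigOperators

noncomputable def minEigR {n : ℕ} (A : Matrix (Fin n) (Fin n) ℝ) : ℝ :=
  if h : A.IsHermitian then ⨅ i, h.eigenvalues i else 0

/-!
Since `Bˡ = P Θˡ P⁻¹`, the trace equals `tr (S · PᵀP)` with `S = Θˡ M Θˡ` positive semidefinite,
where `M = P⁻¹ C_E P⁻ᵀ`, and `tr S = tr (Θ²ˡ M)`. For `S` positive semidefinite and `A` symmetric,
`tr (S A)` lies between `λ_min(A) tr S` and `λ_max(A) tr S`: conjugating by an orthogonal matrix
that diagonalises `A` makes `tr (S A)` an average of the eigenvalues of `A` with the nonnegative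
diagonal entries of the conjugated `S` as weights. Applying this to `(S, PᵀP)` and to `(Θ²ˡ, M)`
and multiplying (all eigenvalues of `PᵀP` are nonnegative) gives both bounds.
-/

namespace Matrix

section

variable {n : Type*} [Fintype n] [DecidableEq n]

theorem pow_conj_of_isUnit_det {α : Type*} [CommRing α] {P : Matrix n n α} (hP : IsUnit P.det)
    (X : Matrix n n α) (l : ℕ) : (P * X * P⁻¹) ^ l = P * X ^ l * P⁻¹ := by
  obtain ⟨u, rfl⟩ := (isUnit_iff_isUnit_det _).mpr hP
  rw [← coe_units_inv]
  exact Units.conj_pow u X l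

theorem trace_conj_diagonal_pow_mul_mul_transpose_pow {α : Type*} [CommRing α]
    {P : Matrix n n α} (hP : IsUnit P.det) (γ : n → α) (C : Matrix n n α) (l : ℕ) :
    ((P * diagonal γ * P⁻¹) ^ l * C * (P * diagonal γ * P⁻¹)ᵀ ^ l).trace =
      (diagonal (γ ^ l) * (P⁻¹ * C * P⁻¹ᵀ) * diagonal (γ ^ l) * (Pᵀ * P)).trace := by
  rw [← transpose_pow, pow_conj_of_isUnit_det hP, diagonal_pow, transpose_mul, transpose_mul,
    diagonal_transpose,
    show P * diagonal (γ ^ l) * P⁻¹ * C * (P⁻¹ᵀ * (diagonal (γ ^ l) * Pᵀ)) =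
        P * (diagonal (γ ^ l) * (P⁻¹ * C * P⁻¹ᵀ) * diagonal (γ ^ l) * Pᵀ) by
      simp only [Matrix.mul_assoc],
    trace_mul_comm, Matrix.mul_assoc (_ * diagonal (γ ^ l))]

theorem trace_unitary_conj_mul_unitary_conj {R : Type*} [CommRing R] [StarRing R]
    (U : unitary (Matrix n n R)) (S A : Matrix n n R) :
    (star (U : Matrix n n R) * S * U * (star (U : Matrix n n R) * A * U)).trace =
      (S * A).trace := by
  have hU : (U : Matrix n n R) * star (U : Matrix n n R) = 1 := Unitary.coe_mul_star_self U
  calc (star (U : Matrix n n R) * S * U * (star (U : Matrix n n R) * A * U)).trace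
      = (star (U : Matrix n n R) * (S * (U * star (U : Matrix n n R)) * A) * U).trace := by
        simp only [Matrix.mul_assoc]
    _ = (S * A).trace := by
        rw [hU, Matrix.mul_one, trace_mul_cycle, hU, Matrix.one_mul]

theorem PosSemidef.trace_mul_diagonal_bounds {S : Matrix n n ℝ} (hS : S.PosSemidef)
    (d : n → ℝ) :
    (⨅ i, d i) * S.trace ≤ (S * diagonal d).trace ∧
      (S * diagonal d).trace ≤ (⨆ i, d i) * S.trace := by
  have htrace : (S * diagonal d).trace = ∑ i, S i i * d i := by
    simp [trace, mul_diagonal]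
  rw [htrace, trace, Finset.mul_sum, Finset.mul_sum]
  constructor
  · refine Finset.sum_le_sum fun i _ => ?_
    rw [mul_comm]
    exact mul_le_mul_of_nonneg_left (ciInf_le (Set.finite_range d).bddBelow i) hS.diag_nonneg
  · refine Finset.sum_le_sum fun i _ => ?_
    rw [mul_comm (⨆ i, d i)]
    exact mul_le_mul_of_nonneg_left (le_ciSup (Set.finite_range d).bddAbove i) hS.diag_nonneg

theorem PosSemidef.trace_mul_eigenvalue_bounds {S A : Matrix n n ℝ} (hS : S.PosSemidef)
    (hA : A.IsHermitian) :
    (⨅ i, hA.eigenvalues i) * S.trace ≤ (S * A).trace ∧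
      (S * A).trace ≤ (⨆ i, hA.eigenvalues i) * S.trace := by
  set U := hA.eigenvectorUnitary
  have hdiag : star (U : Matrix n n ℝ) * A * U = diagonal hA.eigenvalues := by
    simpa using hA.conjStarAlgAut_star_eigenvectorUnitary
  have hconj : (star (U : Matrix n n ℝ) * S * U).PosSemidef := by
    rw [star_eq_conjTranspose]
    exact hS.conjTranspose_mul_mul_same _
  have htrace : (star (U : Matrix n n ℝ) * S * U).trace = S.trace := by
    simpa using trace_unitary_conj_mul_unitary_conj U S 1
  rw [← trace_unitary_conj_mul_unitary_conj U S A, hdiag, ← htrace]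
  exact hconj.trace_mul_diagonal_bounds hA.eigenvalues

end

variable {N : ℕ}

theorem PosSemidef.minEigR_mul_trace_le_trace_mul {S A : Matrix (Fin N) (Fin N) ℝ}
    (hS : S.PosSemidef) (hA : A.IsHermitian) : minEigR A * S.trace ≤ (S * A).trace := by
  rw [minEigR, dif_pos hA]
  exact (hS.trace_mul_eigenvalue_bounds hA).1

theorem PosSemidef.trace_mul_le_maxEigR_mul_trace {S A : Matrix (Fin N) (Fin N) ℝ}
    (hS : S.PosSemidef) (hA : A.IsHermitian) : (S * A).trace ≤ maxEigR A * S.trace := by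
  rw [maxEigR, dif_pos hA]
  exact (hS.trace_mul_eigenvalue_bounds hA).2

theorem PosSemidef.minEigR_nonneg {A : Matrix (Fin N) (Fin N) ℝ} (hA : A.PosSemidef) :
    0 ≤ minEigR A := by
  rw [minEigR, dif_pos hA.isHermitian]
  exact Real.iInf_nonneg hA.eigenvalues_nonneg

theorem PosSemidef.maxEigR_nonneg {A : Matrix (Fin N) (Fin N) ℝ} (hA : A.PosSemidef) :
    0 ≤ maxEigR A := by
  rw [maxEigR, dif_pos hA.isHermitian]
  exact Real.iSup_nonneg hA.eigenvalues_nonneg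

end Matrix

/-- inequalities (67)–(70).
If `B = P Θ P⁻¹` with `Θ = diag(γ₁,…,γ_N)` and `C_E` symmetric positive definite, then with
`e_max, e_min` the extreme eigenvalues of `P⁻¹ C_E (P⁻¹)ᵀ` and `c_max, c_min` those of `Pᵀ P`,
for every `l`,
`c_min e_min Σ_j γ_j^{2l} ≤ trace(Bˡ C_E (Bᵀ)ˡ) ≤ c_max e_max Σ_j γ_j^{2l}`. -/
theorem trace_error_covariance_two_sided_eigenvalue_bounds
    {N : ℕ}
    (P : Matrix (Fin N) (Fin N) ℝ) (hP : IsUnit P.det)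
    (γ : Fin N → ℝ)
    (B : Matrix (Fin N) (Fin N) ℝ)
    (hB : B = P * Matrix.diagonal γ * P⁻¹)
    (CE : Matrix (Fin N) (Fin N) ℝ) (hCE : CE.PosDef) :
    ∀ l : ℕ,
      minEigR (Pᵀ * P) * minEigR (P⁻¹ * CE * (P⁻¹)ᵀ) * (∑ j, γ j ^ (2 * l)) ≤
          (B ^ l * CE * (Bᵀ) ^ l).trace ∧
      (B ^ l * CE * (Bᵀ) ^ l).trace ≤
          maxEigR (Pᵀ * P) * maxEigR (P⁻¹ * CE * (P⁻¹)ᵀ) * (∑ j, γ j ^ (2 * l)) := by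
  intro l
  set M := P⁻¹ * CE * (P⁻¹)ᵀ
  set D := diagonal (γ ^ l)
  have hM : M.PosSemidef := by simpa using hCE.posSemidef.mul_mul_conjTranspose_same P⁻¹
  have hPtP : (Pᵀ * P).PosSemidef := by simpa using posSemidef_conjTranspose_mul_self P
  have hDMD : (D * M * D).PosSemidef := by simpa [D] using hM.mul_mul_conjTranspose_same D
  have hD2 : (diagonal fun j => γ j ^ (2 * l)).PosSemidef :=
    posSemidef_diagonal_iff.mpr fun j => by rw [pow_mul']; positivity
  have hcov : (B ^ l * CE * Bᵀ ^ l).trace = (D * M * D * (Pᵀ * P)).trace := by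
    rw [hB, trace_conj_diagonal_pow_mul_mul_transpose_pow hP]
  have hDMD_trace : (D * M * D).trace = (diagonal (fun j => γ j ^ (2 * l)) * M).trace := by
    rw [trace_mul_cycle, diagonal_mul_diagonal]
    simp only [Pi.pow_apply, ← pow_add, two_mul]
  constructor
  · calc minEigR (Pᵀ * P) * minEigR M * ∑ j, γ j ^ (2 * l)
        ≤ minEigR (Pᵀ * P) * (D * M * D).trace := by
          rw [mul_assoc (minEigR _), hDMD_trace, ← trace_diagonal]
          exact mul_le_mul_of_nonneg_left (hD2.minEigR_mul_trace_le_trace_mul hM.1)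
            hPtP.minEigR_nonneg
      _ ≤ _ := hcov ▸ hDMD.minEigR_mul_trace_le_trace_mul hPtP.1
  · calc (B ^ l * CE * Bᵀ ^ l).trace
        ≤ maxEigR (Pᵀ * P) * (D * M * D).trace :=
          hcov ▸ hDMD.trace_mul_le_maxEigR_mul_trace hPtP.1
      _ ≤ maxEigR (Pᵀ * P) * maxEigR M * ∑ j, γ j ^ (2 * l) := by
          rw [mul_assoc (maxEigR _), hDMD_trace, ← trace_diagonal]
          exact mul_le_mul_of_nonneg_left (hD2.trace_mul_le_maxEigR_mul_trace hM.1)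
            hPtP.maxEigR_nonneg
end

section
/- Let B = P Θ P^{-1} be an N×N real matrix with P invertible and Θ = diag(γ_1,…,γ_N) a real diagonal matrix with 0 < max_j |γ_j| =: γ < 1, and let C_E be an N×N real symmetric positive definite matrix; for l ∈ ℕ set C(l) = B^l C_E (B^T)^l. Let v_1,…,v_k be positive real numbers and for T > 0 set l_i(T) = ⌈T/v_i⌉. Then lim_{T→∞} −(1/T) · log(Σ_{i=1}^k trace(C(l_i(T)))) = (2 / max_{1 ≤ i ≤ k} v_i) · log(1/γ). In particular, the error exponent of the uncoded distributed linear inverse scheme, whose expected squared error at deadline T equals Σ_{i=1}^k trace(C(l_i(T))), is (2 / max_{i ∈ [k]} v_i) · log(1/γ). -/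
/-!
Write `B = P Θ P⁻¹`. If `|γⱼ| = γ`, the `j`-th row `x` of `P⁻¹` is a left eigenvector of `B`, so
`x C(l) xᵀ = γ^{2l} x C_E xᵀ > 0`, and for a positive semidefinite matrix this quadratic form is
bounded by a constant times the trace. Conversely `C(l) = P Θˡ M Θˡ Pᵀ` with `M = P⁻¹ C_E P⁻ᵀ`
gives an entrywise bound. Hence `trace C(l)` lies between two positive multiples of `γ^{2l}`.
Since `T / vᵢ ≤ ⌈T / vᵢ⌉ < T / vᵢ + 1`, the sum over the workers then lies between two positive
multiples of `γ^{2T / vmax}`, the slowest worker dominating, and the constants disappear in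
`-(1/T) log`.
-/

open Matrix Filter
open scoped BigOperators Topology

namespace Matrix

variable {n : Type*} [Fintype n] [DecidableEq n]

theorem PosSemidef.abs_apply_le {A : Matrix n n ℝ} (hA : A.PosSemidef) (i j : n) :
    |A i j| ≤ (A i i + A j j) / 2 := by
  have hsymm : A j i = A i j := by simpa using congr_fun₂ hA.isHermitian i j
  have hplus := hA.dotProduct_mulVec_nonneg (Pi.single i 1 + Pi.single j 1)
  have hminus := hA.dotProduct_mulVec_nonneg (Pi.single i 1 - Pi.single j 1)
  simp only [star_trivial, mulVec_add, mulVec_sub, add_dotProduct, sub_dotProduct,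
    dotProduct_add, dotProduct_sub, mulVec_single, single_dotProduct, one_mul,
    MulOpposite.op_one, one_smul, col_apply] at hplus hminus
  rw [abs_le]
  constructor <;> linarith

omit [DecidableEq n] in
theorem PosSemidef.diag_le_trace {A : Matrix n n ℝ} (hA : A.PosSemidef) (i : n) :
    A i i ≤ A.trace :=
  Finset.single_le_sum (f := A.diag) (fun _ _ => hA.diag_nonneg) (Finset.mem_univ i)

theorem PosSemidef.abs_apply_le_trace {A : Matrix n n ℝ} (hA : A.PosSemidef) (i j : n) :
    |A i j| ≤ A.trace := by
  linarith [hA.abs_apply_le i j, hA.diag_le_trace i, hA.diag_le_trace j]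

theorem PosSemidef.dotProduct_mulVec_le {A : Matrix n n ℝ} (hA : A.PosSemidef) (x : n → ℝ) :
    x ⬝ᵥ A *ᵥ x ≤ (∑ i, |x i|) ^ 2 * A.trace := by
  calc x ⬝ᵥ A *ᵥ x = ∑ i, ∑ j, x i * A i j * x j := by
        simp only [dotProduct, mulVec, Finset.mul_sum, mul_assoc]
    _ ≤ ∑ i, ∑ j, |x i| * A.trace * |x j| := by
        refine Finset.sum_le_sum fun i _ => Finset.sum_le_sum fun j _ => ?_
        calc x i * A i j * x j ≤ |x i * A i j * x j| := le_abs_self _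
          _ = |x i| * |A i j| * |x j| := by rw [abs_mul, abs_mul]
          _ ≤ |x i| * A.trace * |x j| := by gcongr; exact hA.abs_apply_le_trace i j
    _ = (∑ i, |x i|) ^ 2 * A.trace := by
        rw [sq, Finset.sum_mul_sum, Finset.sum_mul]
        refine Finset.sum_congr rfl fun i _ => ?_
        rw [Finset.sum_mul]
        exact Finset.sum_congr rfl fun j _ => by ring

theorem trace_diagonal_mul_mul_diagonal_mul_le (M Q : Matrix n n ℝ) {d : n → ℝ} {δ : ℝ}
    (hd : ∀ j, |d j| ≤ δ) :
    (diagonal d * M * diagonal d * Q).trace ≤ (∑ j, ∑ m, |M j m| * |Q m j|) * δ ^ 2 := by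
  calc (diagonal d * M * diagonal d * Q).trace = ∑ j, ∑ m, d j * M j m * d m * Q m j := by
        simp only [trace, diag_apply, mul_apply (M := diagonal d * M * diagonal d), mul_diagonal,
          diagonal_mul]
    _ ≤ ∑ j, ∑ m, |M j m| * |Q m j| * δ ^ 2 := by
        refine Finset.sum_le_sum fun j _ => Finset.sum_le_sum fun m _ => ?_
        calc d j * M j m * d m * Q m j ≤ |d j * M j m * d m * Q m j| := le_abs_self _
          _ = |d j| * |d m| * (|M j m| * |Q m j|) := by simp only [abs_mul]; ring
          _ ≤ δ * δ * (|M j m| * |Q m j|) := by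
              have hδ := (abs_nonneg _).trans (hd j)
              gcongr
              exacts [hd j, hd m]
          _ = |M j m| * |Q m j| * δ ^ 2 := by ring
    _ = (∑ j, ∑ m, |M j m| * |Q m j|) * δ ^ 2 := by
        simp only [Finset.sum_mul]

theorem pow_conj_diagonal {P : Matrix n n ℝ} (hP : IsUnit P.det) (d : n → ℝ) (l : ℕ) :
    (P * diagonal d * P⁻¹) ^ l = P * diagonal (d ^ l) * P⁻¹ := by
  have hconj : SemiconjBy P (diagonal d) (P * diagonal d * P⁻¹) := by
    rw [SemiconjBy, Matrix.mul_assoc _ P⁻¹, nonsing_inv_mul P hP, Matrix.mul_one]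
  rw [← diagonal_pow, (hconj.pow_right l).eq, Matrix.mul_assoc _ P, mul_nonsing_inv P hP,
    Matrix.mul_one]

theorem row_inv_vecMul_conj_diagonal {P : Matrix n n ℝ} (hP : IsUnit P.det) (d : n → ℝ)
    (j : n) : P⁻¹.row j ᵥ* (P * diagonal d * P⁻¹) = d j • P⁻¹.row j := by
  rw [← single_one_vecMul, vecMul_vecMul, ← Matrix.mul_assoc, ← Matrix.mul_assoc,
    nonsing_inv_mul P hP, Matrix.one_mul, ← vecMul_vecMul, single_vecMul_diagonal, one_mul,
    single_vecMul, single_one_vecMul]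

theorem row_ne_zero_of_isUnit_det {A : Matrix n n ℝ} (hA : IsUnit A.det) (j : n) :
    A.row j ≠ 0 := by
  intro hrow
  have hentry (k : n) : A j k = 0 := congr_fun hrow k
  have hjj := congr_fun₂ (mul_nonsing_inv A hA) j j
  simp [mul_apply, hentry] at hjj

theorem vecMul_pow_of_vecMul_eq_smul {B : Matrix n n ℝ} {x : n → ℝ} {μ : ℝ}
    (hx : x ᵥ* B = μ • x) (l : ℕ) : x ᵥ* B ^ l = μ ^ l • x := by
  induction l with
  | zero => simp
  | succ l ih => rw [pow_succ', ← vecMul_vecMul, hx, smul_vecMul, ih, smul_smul, pow_succ']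

end Matrix

variable {N : ℕ} {B CE : Matrix (Fin N) (Fin N) ℝ}

theorem matC_posSemidef (hCE : CE.PosSemidef) (l : ℕ) : (matC B CE l).PosSemidef := by
  simpa [matC, transpose_pow] using hCE.mul_mul_conjTranspose_same (B ^ l)

theorem dotProduct_matC_mulVec {x : Fin N → ℝ} {μ : ℝ} (hx : x ᵥ* B = μ • x) (l : ℕ) :
    x ⬝ᵥ matC B CE l *ᵥ x = (μ ^ 2) ^ l * (x ⬝ᵥ CE *ᵥ x) := by
  rw [matC, ← mulVec_mulVec, ← mulVec_mulVec, dotProduct_mulVec, ← transpose_pow,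
    mulVec_transpose, vecMul_pow_of_vecMul_eq_smul hx, smul_dotProduct, mulVec_smul,
    dotProduct_smul, smul_eq_mul, smul_eq_mul, ← mul_assoc, ← mul_pow, sq]

theorem exists_pos_mul_pow_le_trace_matC (hCE : CE.PosDef) {x : Fin N → ℝ} (hx0 : x ≠ 0)
    {μ : ℝ} (hx : x ᵥ* B = μ • x) : ∃ c > 0, ∀ l, c * (μ ^ 2) ^ l ≤ (matC B CE l).trace := by
  have hquad : 0 < x ⬝ᵥ CE *ᵥ x := by simpa using hCE.dotProduct_mulVec_pos hx0
  have hnorm : 0 < (∑ i, |x i|) ^ 2 := by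
    obtain ⟨i, hi⟩ := Function.ne_iff.mp hx0
    have : 0 < ∑ i, |x i| :=
      Finset.sum_pos' (fun j _ => abs_nonneg _) ⟨i, Finset.mem_univ i, abs_pos.mpr hi⟩
    positivity
  refine ⟨(x ⬝ᵥ CE *ᵥ x) / (∑ i, |x i|) ^ 2, by positivity, fun l => ?_⟩
  have hle := (matC_posSemidef (B := B) hCE.posSemidef l).dotProduct_mulVec_le x
  rw [dotProduct_matC_mulVec hx] at hle
  rw [div_mul_eq_mul_div, div_le_iff₀ hnorm]
  linarith

theorem exists_trace_matC_le {P : Matrix (Fin N) (Fin N) ℝ} (hP : IsUnit P.det)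
    {d : Fin N → ℝ} (hB : B = P * diagonal d * P⁻¹) {γ : ℝ} (hd : ∀ j, |d j| ≤ γ) :
    ∃ c, ∀ l, (matC B CE l).trace ≤ c * (γ ^ 2) ^ l := by
  refine ⟨∑ j, ∑ m, |(P⁻¹ * CE * P⁻¹ᵀ) j m| * |(Pᵀ * P) m j|, fun l => ?_⟩
  have hconj : matC B CE l
      = P * (diagonal (d ^ l) * (P⁻¹ * CE * P⁻¹ᵀ) * diagonal (d ^ l) * Pᵀ) := by
    rw [matC, ← transpose_pow, hB, pow_conj_diagonal hP]
    simp only [transpose_mul, diagonal_transpose, Matrix.mul_assoc]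
  rw [hconj, trace_mul_comm, Matrix.mul_assoc _ Pᵀ, ← pow_mul, mul_comm 2 l, pow_mul]
  refine trace_diagonal_mul_mul_diagonal_mul_le _ _ fun j => ?_
  rw [Pi.pow_apply, abs_pow]
  exact pow_le_pow_left₀ (abs_nonneg _) (hd j) l

open Real

theorem pow_natCeil_le_rpow {r : ℝ} (hr0 : 0 < r) (hr1 : r ≤ 1) (t : ℝ) : r ^ ⌈t⌉₊ ≤ r ^ t := by
  rw [← rpow_natCast]
  exact rpow_le_rpow_of_exponent_ge hr0 hr1 (Nat.le_ceil t)

theorem mul_rpow_le_pow_natCeil {r : ℝ} (hr0 : 0 < r) (hr1 : r ≤ 1) {t : ℝ} (ht : 0 ≤ t) :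
    r * r ^ t ≤ r ^ ⌈t⌉₊ := by
  rw [← rpow_natCast, mul_comm, ← rpow_add_one hr0.ne']
  exact rpow_le_rpow_of_exponent_ge hr0 hr1 (Nat.ceil_lt_add_one ht).le

theorem tendsto_log_div_of_rpow_bounds {S : ℝ → ℝ} {a b r w : ℝ} (ha : 0 < a) (hb : 0 < b)
    (hr : 0 < r) (hlo : ∀ᶠ T in atTop, a * r ^ (T / w) ≤ S T)
    (hhi : ∀ᶠ T in atTop, S T ≤ b * r ^ (T / w)) :
    Tendsto (fun T => log (S T) / T) atTop (𝓝 (log r / w)) := by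
  have hlog_mul (c T : ℝ) (hc : 0 < c) (hT : 0 < T) :
      log (c * r ^ (T / w)) / T = log c / T + log r / w := by
    rw [log_mul hc.ne' (rpow_pos_of_pos hr _).ne', log_rpow hr]
    field_simp
  have hlim (c : ℝ) : Tendsto (fun T => log c / T + log r / w) atTop (𝓝 (log r / w)) := by
    simpa using (tendsto_const_nhds.div_atTop tendsto_id).add_const (log r / w)
  refine tendsto_of_tendsto_of_tendsto_of_le_of_le' (hlim a) (hlim b) ?_ ?_
  · filter_upwards [hlo, eventually_gt_atTop 0] with T hT hTpos
    rw [← hlog_mul a T ha hTpos]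
    gcongr
  · filter_upwards [hlo, hhi, eventually_gt_atTop 0] with T hTlo hT hTpos
    rw [← hlog_mul b T hb hTpos]
    gcongr
    exact lt_of_lt_of_le (by positivity) hTlo

theorem tendsto_log_sum_natCeil_div {k : ℕ} {f : ℕ → ℝ} {c₁ c₂ r : ℝ} (hc₁ : 0 < c₁)
    (hlo : ∀ l, c₁ * r ^ l ≤ f l) (hhi : ∀ l, f l ≤ c₂ * r ^ l) (hr0 : 0 < r) (hr1 : r ≤ 1)
    {v : Fin k → ℝ} (hv : ∀ i, 0 < v i) {vmax : ℝ} (hvmax_ub : ∀ i, v i ≤ vmax)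
    (hvmax_att : ∃ i, v i = vmax) :
    Tendsto (fun T => log (∑ i, f ⌈T / v i⌉₊) / T) atTop (𝓝 (log r / vmax)) := by
  obtain ⟨i₀, rfl⟩ := hvmax_att
  have hc₂ : 0 < c₂ := by
    have h₀ := (hlo 0).trans (hhi 0)
    rw [pow_zero, mul_one, mul_one] at h₀
    exact hc₁.trans_le h₀
  have hk : (0 : ℝ) < k := Nat.cast_pos.mpr i₀.pos
  refine tendsto_log_div_of_rpow_bounds (a := c₁ * r) (b := k * c₂) (by positivity)
    (by positivity) hr0 ?_ ?_
  · filter_upwards [eventually_ge_atTop 0] with T hT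
    have hf_nonneg (l : ℕ) : 0 ≤ f l := le_trans (by positivity) (hlo l)
    calc c₁ * r * r ^ (T / v i₀) ≤ c₁ * r ^ ⌈T / v i₀⌉₊ := by
          rw [mul_assoc]
          gcongr
          exact mul_rpow_le_pow_natCeil hr0 hr1 (div_nonneg hT (hv i₀).le)
      _ ≤ f ⌈T / v i₀⌉₊ := hlo _
      _ ≤ ∑ i, f ⌈T / v i⌉₊ :=
          Finset.single_le_sum (f := fun i => f ⌈T / v i⌉₊) (fun i _ => hf_nonneg _)
            (Finset.mem_univ i₀)
  · filter_upwards [eventually_ge_atTop 0] with T hT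
    calc ∑ i, f ⌈T / v i⌉₊ ≤ ∑ _i : Fin k, c₂ * r ^ (T / v i₀) := by
          refine Finset.sum_le_sum fun i _ => (hhi _).trans ?_
          gcongr
          calc r ^ ⌈T / v i⌉₊ ≤ r ^ (T / v i) := pow_natCeil_le_rpow hr0 hr1 _
            _ ≤ r ^ (T / v i₀) := rpow_le_rpow_of_exponent_ge hr0 hr1
                (div_le_div_of_nonneg_left hT (hv i) (hvmax_ub i))
      _ = k * c₂ * r ^ (T / v i₀) := by simp [mul_assoc]

theorem uncoded_error_exponent_general
    {N k : ℕ}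
    (P : Matrix (Fin N) (Fin N) ℝ) (hP : IsUnit P.det)
    (γv : Fin N → ℝ)
    (B : Matrix (Fin N) (Fin N) ℝ)
    (hB : B = P * Matrix.diagonal γv * P⁻¹)
    (γ : ℝ) (hγ_ub : ∀ j, |γv j| ≤ γ) (hγ_att : ∃ j, |γv j| = γ)
    (hγ_pos : 0 < γ) (hγ_lt : γ < 1)
    (CE : Matrix (Fin N) (Fin N) ℝ) (hCE : CE.PosDef)
    (v : Fin k → ℝ) (hv : ∀ i, 0 < v i)
    (vmax : ℝ) (hvmax_ub : ∀ i, v i ≤ vmax) (hvmax_att : ∃ i, v i = vmax) :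
    Tendsto
      (fun T : ℝ =>
        -(1 / T) * Real.log (∑ i : Fin k, (matC B CE ⌈T / v i⌉₊).trace))
      atTop (𝓝 ((2 / vmax) * Real.log (1 / γ))) := by
  obtain ⟨j, hj⟩ := hγ_att
  have heigen : P⁻¹.row j ᵥ* B = γv j • P⁻¹.row j := hB ▸ row_inv_vecMul_conj_diagonal hP γv j
  obtain ⟨c₁, hc₁, hlo⟩ := exists_pos_mul_pow_le_trace_matC hCE
    (row_ne_zero_of_isUnit_det (isUnit_nonsing_inv_det P hP) j) heigen
  obtain ⟨c₂, hhi⟩ := exists_trace_matC_le (CE := CE) hP hB hγ_ub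
  rw [← sq_abs, hj] at hlo
  have hlim := (tendsto_log_sum_natCeil_div hc₁ hlo hhi (by positivity)
    (pow_le_one₀ hγ_pos.le hγ_lt.le) hv hvmax_ub hvmax_att).neg
  convert hlim using 2 with T
  · ring
  · rw [Real.log_pow, one_div, Real.log_inv]
    ring

/-- Theorem 7, uncoded part: the error exponent of the uncoded scheme.
Let `B = P Θ P⁻¹` with `Θ = diag(γ₁,…,γ_N)` and `γ = max_j |γ_j| ∈ (0,1)`, `C_E`
symmetric positive definite, `v₁,…,v_k > 0` the per-iteration times and
`l_i(T) = ⌈T / v_i⌉`.  Then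
`lim_{T→∞} -(1/T) log (Σᵢ trace C(lᵢ(T))) = (2 / max_i v_i) · log(1/γ)`. -/
theorem uncoded_error_exponent
    {N k : ℕ} (hN : 0 < N) (hk : 0 < k)
    (P : Matrix (Fin N) (Fin N) ℝ) (hP : IsUnit P.det)
    (γv : Fin N → ℝ)
    (B : Matrix (Fin N) (Fin N) ℝ)
    (hB : B = P * Matrix.diagonal γv * P⁻¹)
    (γ : ℝ) (hγ_ub : ∀ j, |γv j| ≤ γ) (hγ_att : ∃ j, |γv j| = γ)
    (hγ_pos : 0 < γ) (hγ_lt : γ < 1)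
    (CE : Matrix (Fin N) (Fin N) ℝ) (hCE : CE.PosDef)
    (v : Fin k → ℝ) (hv : ∀ i, 0 < v i)
    (vmax : ℝ) (hvmax_ub : ∀ i, v i ≤ vmax) (hvmax_att : ∃ i, v i = vmax) :
    Tendsto
      (fun T : ℝ =>
        -(1 / T) * Real.log (∑ i : Fin k, (matC B CE ⌈T / v i⌉₊).trace))
      atTop (𝓝 ((2 / vmax) * Real.log (1 / γ))) :=
  uncoded_error_exponent_general P hP γv B hB γ hγ_ub hγ_att hγ_pos hγ_lt CE hCE v hv vmax hvmax_ub
    hvmax_att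
end

section
/- Let B = P Θ P^{-1} be an N×N real matrix with P invertible and Θ = diag(γ_1,…,γ_N) a real diagonal matrix with 0 < max_j |γ_j| =: γ < 1, and let C_E be an N×N real symmetric positive definite matrix; for l ∈ ℕ set C(l) = B^l C_E (B^T)^l. Let G be a k×n complex matrix (k < n) with orthonormal rows (G G^H = I_k) such that s_min := min over all subsets S ⊆ {1,…,n} of size k of the smallest eigenvalue of G_S G_S^H is strictly positive, where G_S is the k×k submatrix of the columns of G indexed by S. Let v_1,…,v_n be positive real numbers with order statistics v_{(1)} ≤ v_{(2)} ≤ … ≤ v_{(n)}, and for T > 0 set l_i(T) = ⌈T/v_i⌉ and Λ(T) = diag(trace(C(l_1(T))),…,trace(C(l_n(T)))). Then liminf_{T→∞} −(1/T) · log trace((G Λ(T)^{-1} G^H)^{-1}) ≥ (2 / v_{(k)}) · log(1/γ). Consequently, the error exponent of the coded linear inverse scheme, whose expected squared error is at most trace((G Λ(T)^{-1} G^H)^{-1}), is at least (2 / v_{(k)}) · log(1/γ), which is determined by the k-th fastest of the n workers. -/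
open Matrix Filter
open scoped BigOperators Topology

/-- smallest eigenvalue of a complex Hermitian matrix. -/
noncomputable def minEigC {m : ℕ} (A : Matrix (Fin m) (Fin m) ℂ) : ℝ :=
  if h : A.IsHermitian then ⨅ i, h.eigenvalues i else 0

/-- `s_min`: the minimum over all column subsets `S` of size `k` of the smallest
eigenvalue of `G_S G_Sᴴ` (here realized as `(G_S G_Sᴴ)_{i,i'} = Σ_{j ∈ S} G i j conj(G i' j)`,
which is independent of the ordering of the columns in `S`). -/
noncomputable def sMin {k n : ℕ} (hkn : k ≤ n) (G : Matrix (Fin k) (Fin n) ℂ) : ℝ :=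
  (Finset.univ.filter fun S : Finset (Fin n) => S.card = k).inf'
    (by
      obtain ⟨t, _, ht⟩ :=
        Finset.exists_subset_card_eq (s := (Finset.univ : Finset (Fin n))) (n := k)
          (by simpa using hkn)
      exact ⟨t, by simp [ht]⟩)
    fun S => minEigC (Matrix.of fun i i' => ∑ j ∈ S, G i j * star (G i' j))

/-!
Write `t_j = trace C(⌈T/v_j⌉)` and `A = G diag(t)⁻¹ Gᴴ`, so that `xᴴ A x = ∑_j |(Gᴴx)_j|² / t_j`.
Because `B` is diagonalizable with spectral radius `γ` and `C_E` is positive definite,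
`trace C(l)` is comparable to `γ^{2l}`: the Frobenius norms of `Bˡ` and `diag(γ_jˡ)` agree up to
the factor `‖P‖ ‖P⁻¹‖`. Keeping only the `k` fastest workers `S` in the sum gives
`xᴴ A x ≥ s_min ‖x‖² / max_{j ∈ S} t_j`, and `G Gᴴ = 1` gives `xᴴ A x ≤ ‖x‖² / min_j t_j`, so
`trace A⁻¹` lies between `k min_j t_j` and `k max_{j ∈ S} t_j / s_min`. The upper bound decays like
`γ^{2T/v_(k)}`, which is the exponent; the lower bound, decaying like `γ^{2T/v_(1)}`, keeps
`-(1/T) log trace A⁻¹` bounded above, without which the real `liminf` would be a junk value.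
-/

namespace Matrix

variable {𝕜 ι κ : Type*} [RCLike 𝕜] [Fintype ι] [Fintype κ]

lemma re_star_dotProduct_self (x : ι → 𝕜) : RCLike.re (star x ⬝ᵥ x) = ∑ i, ‖x i‖ ^ 2 := by
  simp only [dotProduct, Pi.star_apply, RCLike.star_def, RCLike.conj_mul, map_sum]
  norm_cast

lemma re_star_dotProduct_mul_diagonal_mul_conjTranspose_mulVec [DecidableEq κ]
    (G : Matrix ι κ 𝕜) (r : κ → ℝ) (x : ι → 𝕜) :
    RCLike.re (star x ⬝ᵥ (G * diagonal (fun j => (r j : 𝕜)) * Gᴴ) *ᵥ x) =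
      ∑ j, r j * ‖(Gᴴ *ᵥ x) j‖ ^ 2 := by
  have hstar : star x ᵥ* G = star (Gᴴ *ᵥ x) := by
    rw [star_mulVec, conjTranspose_conjTranspose]
  rw [← mulVec_mulVec, ← mulVec_mulVec, dotProduct_mulVec, hstar]
  simp only [dotProduct, mulVec_diagonal, Pi.star_apply, RCLike.star_def, mul_left_comm _ (r _ : 𝕜),
    RCLike.conj_mul, map_sum]
  norm_cast

lemma sum_norm_sq_conjTranspose_mulVec [DecidableEq ι] {G : Matrix ι κ 𝕜} (hG : G * Gᴴ = 1)
    (x : ι → 𝕜) : ∑ j, ‖(Gᴴ *ᵥ x) j‖ ^ 2 = ∑ i, ‖x i‖ ^ 2 := by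
  classical
  have h := re_star_dotProduct_mul_diagonal_mul_conjTranspose_mulVec G 1 x
  simpa [hG, re_star_dotProduct_self] using h.symm

variable [DecidableEq ι] {A : Matrix ι ι 𝕜}

lemma IsHermitian.exists_re_star_dotProduct_mulVec_eq (hA : A.IsHermitian) (x : ι → 𝕜) :
    ∃ y : ι → 𝕜, ∑ i, ‖y i‖ ^ 2 = ∑ i, ‖x i‖ ^ 2 ∧
      RCLike.re (star x ⬝ᵥ A *ᵥ x) = ∑ i, hA.eigenvalues i * ‖y i‖ ^ 2 := by
  set U : Matrix ι ι 𝕜 := ↑hA.eigenvectorUnitary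
  have hU : U * Uᴴ = 1 := Unitary.mul_star_self_of_mem hA.eigenvectorUnitary.2
  have hA' : A = U * diagonal (fun i => (hA.eigenvalues i : 𝕜)) * Uᴴ := hA.spectral_theorem
  refine ⟨Uᴴ *ᵥ x, sum_norm_sq_conjTranspose_mulVec hU x, ?_⟩
  conv_lhs => rw [hA']
  exact re_star_dotProduct_mul_diagonal_mul_conjTranspose_mulVec U _ x

lemma IsHermitian.mul_sum_norm_sq_le_re (hA : A.IsHermitian) {c : ℝ}
    (hc : ∀ i, c ≤ hA.eigenvalues i) (x : ι → 𝕜) :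
    c * ∑ i, ‖x i‖ ^ 2 ≤ RCLike.re (star x ⬝ᵥ A *ᵥ x) := by
  obtain ⟨y, hy, hxy⟩ := hA.exists_re_star_dotProduct_mulVec_eq x
  rw [hxy, ← hy, Finset.mul_sum]
  gcongr with i
  exact hc i

lemma IsHermitian.re_le_mul_sum_norm_sq (hA : A.IsHermitian) {d : ℝ}
    (hd : ∀ i, hA.eigenvalues i ≤ d) (x : ι → 𝕜) :
    RCLike.re (star x ⬝ᵥ A *ᵥ x) ≤ d * ∑ i, ‖x i‖ ^ 2 := by
  obtain ⟨y, hy, hxy⟩ := hA.exists_re_star_dotProduct_mulVec_eq x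
  rw [hxy, ← hy, Finset.mul_sum]
  gcongr with i
  exact hd i

lemma isUnit_of_mul_sum_norm_sq_le_re {c : ℝ} (hc : 0 < c)
    (hlow : ∀ x : ι → 𝕜, c * ∑ i, ‖x i‖ ^ 2 ≤ RCLike.re (star x ⬝ᵥ A *ᵥ x)) : IsUnit A := by
  refine mulVec_injective_iff_isUnit.mp fun x y hxy => sub_eq_zero.mp ?_
  have hzero : c * ∑ i, ‖(x - y) i‖ ^ 2 ≤ 0 := by
    simpa [mulVec_sub, hxy] using hlow (x - y)
  have hsum : ∑ i, ‖(x - y) i‖ ^ 2 = 0 :=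
    le_antisymm (nonpos_of_mul_nonpos_right hzero hc) (by positivity)
  ext i
  simpa using (Finset.sum_eq_zero_iff_of_nonneg (fun i _ => by positivity)).mp hsum i

/-- An eigenvalue `μ` of `A⁻¹` with unit eigenvector `w` satisfies `μ · re (wᴴ A w) = 1`. -/
lemma IsHermitian.re_trace_inv_mem_Icc (hA : A.IsHermitian) {c d : ℝ} (hc : 0 < c)
    (hlow : ∀ x : ι → 𝕜, c * ∑ i, ‖x i‖ ^ 2 ≤ RCLike.re (star x ⬝ᵥ A *ᵥ x))
    (hup : ∀ x : ι → 𝕜, RCLike.re (star x ⬝ᵥ A *ᵥ x) ≤ d * ∑ i, ‖x i‖ ^ 2) :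
    RCLike.re A⁻¹.trace ∈ Set.Icc (Fintype.card ι / d) (Fintype.card ι / c) := by
  have hAinv : A⁻¹.IsHermitian := hA.inv
  have hA_unit : IsUnit A := isUnit_of_mul_sum_norm_sq_le_re hc hlow
  have heig : ∀ i, hAinv.eigenvalues i ∈ Set.Icc (1 / d) (1 / c) := by
    intro i
    set w : ι → 𝕜 := ⇑(hAinv.eigenvectorBasis i)
    set q := RCLike.re (star w ⬝ᵥ A *ᵥ w)
    have hw : ∑ j, ‖w j‖ ^ 2 = 1 := by
      have h1 := hAinv.eigenvectorBasis.orthonormal.1 i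
      rwa [EuclideanSpace.norm_eq, Real.sqrt_eq_one] at h1
    have hμq : hAinv.eigenvalues i * q = 1 := by
      have hw' : w = hAinv.eigenvalues i • A *ᵥ w := by
        conv_lhs => rw [← one_mulVec w, ← mul_nonsing_inv A ((isUnit_iff_isUnit_det A).mp hA_unit),
          ← mulVec_mulVec, hAinv.mulVec_eigenvectorBasis i, mulVec_smul]
      have := congrArg (fun z => RCLike.re (star w ⬝ᵥ z)) hw'
      simp only [re_star_dotProduct_self, hw, dotProduct_smul, RCLike.smul_re] at this
      exact this.symm
    have hcq : c ≤ q := by simpa [hw] using hlow w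
    have hqd : q ≤ d := by simpa [hw] using hup w
    have hq : 0 < q := hc.trans_le hcq
    rw [eq_one_div_of_mul_eq_one_left hμq]
    exact ⟨one_div_le_one_div_of_le hq hqd, one_div_le_one_div_of_le hc hcq⟩
  rw [hAinv.trace_eq_sum_eigenvalues, ← RCLike.ofReal_sum, RCLike.ofReal_re]
  have hcard (a : ℝ) : (Fintype.card ι : ℝ) / a = ∑ _i : ι, 1 / a := by
    simp [div_eq_mul_inv]
  rw [hcard, hcard]
  exact ⟨Finset.sum_le_sum fun i _ => (heig i).1, Finset.sum_le_sum fun i _ => (heig i).2⟩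

end Matrix

section Frobenius

attribute [local instance] Matrix.frobeniusNormedAddCommGroup

namespace Matrix

variable {ι : Type*} [Fintype ι] [DecidableEq ι]

lemma frobenius_norm_sq_eq_sum {m n α : Type*} [Fintype m] [Fintype n] [NormedAddCommGroup α]
    (A : Matrix m n α) : ‖A‖ ^ 2 = ∑ i, ∑ j, ‖A i j‖ ^ 2 := by
  change ‖WithLp.toLp 2 fun i => WithLp.toLp 2 fun j => A i j‖ ^ 2 = _
  simp [PiLp.norm_sq_eq_of_L2]

lemma IsHermitian.trace_mul_mul_transpose_mem_Icc {A : Matrix ι ι ℝ} (hA : A.IsHermitian)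
    {c d : ℝ} (hc : ∀ i, c ≤ hA.eigenvalues i) (hd : ∀ i, hA.eigenvalues i ≤ d)
    (X : Matrix ι ι ℝ) : (X * A * Xᵀ).trace ∈ Set.Icc (c * ‖X‖ ^ 2) (d * ‖X‖ ^ 2) := by
  have htrace : (X * A * Xᵀ).trace = ∑ i, RCLike.re (star (X i) ⬝ᵥ A *ᵥ X i) := by
    simp [trace, mul_mul_apply]
  rw [htrace, frobenius_norm_sq_eq_sum, Finset.mul_sum, Finset.mul_sum]
  exact ⟨Finset.sum_le_sum fun i _ => hA.mul_sum_norm_sq_le_re hc (X i),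
    Finset.sum_le_sum fun i _ => hA.re_le_mul_sum_norm_sq hd (X i)⟩

lemma pow_mul_eq_mul_diagonal_pow {R : Type*} [CommRing R] {P B : Matrix ι ι R} {d : ι → R}
    (hP : IsUnit P.det) (hB : B = P * diagonal d * P⁻¹) (l : ℕ) :
    B ^ l * P = P * diagonal (d ^ l) := by
  have h : SemiconjBy P (diagonal d) B := by
    rw [SemiconjBy, hB, Matrix.mul_assoc _ P⁻¹, nonsing_inv_mul P hP, Matrix.mul_one]
  rw [← diagonal_pow, (h.pow_right l).eq]

variable {𝕜 : Type*} [RCLike 𝕜] {P B : Matrix ι ι 𝕜} {d : ι → 𝕜}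

lemma norm_pow_le_of_eq_mul_diagonal_mul_inv (hP : IsUnit P.det)
    (hB : B = P * diagonal d * P⁻¹) (l : ℕ) :
    ‖B ^ l‖ ≤ ‖P‖ * ‖P⁻¹‖ * ‖diagonal (d ^ l)‖ := by
  have : B ^ l = P * diagonal (d ^ l) * P⁻¹ := by
    rw [← pow_mul_eq_mul_diagonal_pow hP hB, Matrix.mul_assoc, mul_nonsing_inv P hP,
      Matrix.mul_one]
  rw [this]
  calc ‖P * diagonal (d ^ l) * P⁻¹‖ ≤ ‖P‖ * ‖diagonal (d ^ l)‖ * ‖P⁻¹‖ :=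
        (frobenius_norm_mul _ _).trans (by gcongr; exact frobenius_norm_mul _ _)
    _ = _ := by ring

lemma norm_diagonal_pow_le_of_eq_mul_diagonal_mul_inv (hP : IsUnit P.det)
    (hB : B = P * diagonal d * P⁻¹) (l : ℕ) :
    ‖diagonal (d ^ l)‖ ≤ ‖P‖ * ‖P⁻¹‖ * ‖B ^ l‖ := by
  have : diagonal (d ^ l) = P⁻¹ * (B ^ l * P) := by
    rw [pow_mul_eq_mul_diagonal_pow hP hB, ← Matrix.mul_assoc, nonsing_inv_mul P hP,
      Matrix.one_mul]
  rw [this]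
  calc ‖P⁻¹ * (B ^ l * P)‖ ≤ ‖P⁻¹‖ * (‖B ^ l‖ * ‖P‖) :=
        (frobenius_norm_mul _ _).trans (by gcongr; exact frobenius_norm_mul _ _)
    _ = _ := by ring

lemma norm_diagonal_pow_sq_mem_Icc {γ : ℝ} (hub : ∀ i, ‖d i‖ ≤ γ) {i₀ : ι} (hatt : ‖d i₀‖ = γ)
    (l : ℕ) : ‖diagonal (d ^ l)‖ ^ 2 ∈ Set.Icc (γ ^ (2 * l)) (Fintype.card ι * γ ^ (2 * l)) := by
  have hγ : 0 ≤ γ := hatt ▸ norm_nonneg _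
  have hterm (i : ι) : ‖(d ^ l) i‖ ^ 2 = ‖d i‖ ^ (2 * l) := by
    rw [Pi.pow_apply, norm_pow, ← pow_mul, mul_comm]
  rw [frobenius_norm_diagonal, PiLp.norm_sq_eq_of_L2]
  simp only [hterm]
  constructor
  · rw [← hatt]
    exact Finset.single_le_sum (f := fun i => ‖d i‖ ^ (2 * l)) (fun i _ => by positivity)
      (Finset.mem_univ i₀)
  · calc ∑ i, ‖d i‖ ^ (2 * l) ≤ ∑ _i : ι, γ ^ (2 * l) :=
          Finset.sum_le_sum fun i _ => pow_le_pow_left₀ (norm_nonneg _) (hub i) _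
      _ = _ := by simp

end Matrix

lemma exists_trace_matC_mem_Icc {N : ℕ} {P : Matrix (Fin N) (Fin N) ℝ} (hP : IsUnit P.det)
    {γv : Fin N → ℝ} {B : Matrix (Fin N) (Fin N) ℝ} (hB : B = P * diagonal γv * P⁻¹) {γ : ℝ}
    (hγ_ub : ∀ j, |γv j| ≤ γ) (hγ_att : ∃ j, |γv j| = γ) {CE : Matrix (Fin N) (Fin N) ℝ}
    (hCE : CE.PosDef) :
    ∃ m M : ℝ, 0 < m ∧ 0 < M ∧
      ∀ l, (matC B CE l).trace ∈ Set.Icc (m * γ ^ (2 * l)) (M * γ ^ (2 * l)) := by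
  obtain ⟨j₀, hj₀⟩ := hγ_att
  have hne : Nonempty (Fin N) := ⟨j₀⟩
  have hnorm_pos {Q : Matrix (Fin N) (Fin N) ℝ} (hQ : IsUnit Q.det) : 0 < ‖Q‖ :=
    norm_pos_iff.mpr fun h => by simp [h] at hQ
  set κ := ‖P‖ * ‖P⁻¹‖
  have hκ : 0 < κ := mul_pos (hnorm_pos hP) (hnorm_pos (isUnit_nonsing_inv_det P hP))
  have hH : CE.IsHermitian := hCE.1
  set c := ⨅ i, hH.eigenvalues i
  set C := ⨆ i, hH.eigenvalues i
  have hc : 0 < c := by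
    obtain ⟨i₁, hi₁⟩ := exists_eq_ciInf_of_finite (f := hH.eigenvalues)
    exact (hCE.eigenvalues_pos i₁).trans_eq hi₁
  have hC : 0 < C :=
    hc.trans_le (ciInf_le_ciSup (Finite.bddBelow_range _) (Finite.bddAbove_range _))
  have hN : (0 : ℝ) < N := Nat.cast_pos.mpr j₀.pos
  refine ⟨c / κ ^ 2, C * κ ^ 2 * N, by positivity, by positivity, fun l => ?_⟩
  have hX := hH.trace_mul_mul_transpose_mem_Icc
    (fun i => ciInf_le (Finite.bddBelow_range _) i) (fun i => le_ciSup (Finite.bddAbove_range _) i)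
    (B ^ l)
  have hD := norm_diagonal_pow_sq_mem_Icc (d := γv) hγ_ub hj₀ l
  have hBD := norm_pow_le_of_eq_mul_diagonal_mul_inv hP hB l
  have hDB := norm_diagonal_pow_le_of_eq_mul_diagonal_mul_inv hP hB l
  rw [matC, ← transpose_pow]
  constructor
  · calc c / κ ^ 2 * γ ^ (2 * l) ≤ c / κ ^ 2 * ‖diagonal (γv ^ l)‖ ^ 2 := by gcongr; exact hD.1
      _ ≤ c / κ ^ 2 * (κ * ‖B ^ l‖) ^ 2 := by gcongr
      _ = c * ‖B ^ l‖ ^ 2 := by field_simp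
      _ ≤ _ := hX.1
  · calc _ ≤ C * ‖B ^ l‖ ^ 2 := hX.2
      _ ≤ C * (κ * ‖diagonal (γv ^ l)‖) ^ 2 := by gcongr
      _ = C * κ ^ 2 * ‖diagonal (γv ^ l)‖ ^ 2 := by ring
      _ ≤ C * κ ^ 2 * (N * γ ^ (2 * l)) := by gcongr; simpa using hD.2
      _ = _ := by ring

end Frobenius

lemma sMin_mul_sum_norm_sq_le {k n : ℕ} (hkn : k ≤ n) (G : Matrix (Fin k) (Fin n) ℂ)
    {S : Finset (Fin n)} (hS : S.card = k) (x : Fin k → ℂ) :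
    sMin hkn G * ∑ i, ‖x i‖ ^ 2 ≤ ∑ j ∈ S, ‖(Gᴴ *ᵥ x) j‖ ^ 2 := by
  set r : Fin n → ℝ := fun j => if j ∈ S then 1 else 0
  set GS := G * diagonal (fun j => (r j : ℂ)) * Gᴴ
  have hGS : (Matrix.of fun i i' => ∑ j ∈ S, G i j * star (G i' j)) = GS := by
    ext i i'
    simp [GS, r, mul_apply, diagonal, apply_ite, ite_mul, Finset.sum_ite_mem]
  have hH : GS.IsHermitian :=
    isHermitian_mul_mul_conjTranspose G (isHermitian_diagonal_of_self_adjoint _ (by ext; simp))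
  have hle : sMin hkn G ≤ ⨅ i, hH.eigenvalues i := by
    refine (Finset.inf'_le _ (b := S) (by simpa using hS)).trans_eq ?_
    rw [hGS, minEigC, dif_pos hH]
  have := hH.mul_sum_norm_sq_le_re (fun i => hle.trans (ciInf_le (Finite.bddBelow_range _) i)) x
  refine this.trans_eq ((re_star_dotProduct_mul_diagonal_mul_conjTranspose_mulVec G r x).trans ?_)
  simp [r, ite_mul, Finset.sum_ite_mem]

lemma Tuple.exists_card_eq_forall_le_sort {α : Type*} [LinearOrder α] {n : ℕ} (f : Fin n → α)
    (i : Fin n) : ∃ S : Finset (Fin n), S.card = i + 1 ∧ ∀ j ∈ S, f j ≤ f (Tuple.sort f i) := by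
  refine ⟨(Finset.Iic i).map (Tuple.sort f).toEmbedding, by simp, ?_⟩
  simp only [Finset.mem_map, Finset.mem_Iic, Equiv.coe_toEmbedding]
  rintro _ ⟨a, ha, rfl⟩
  exact Tuple.monotone_sort f ha

lemma pow_two_mul_ceil_div_mem_Icc {γ T v : ℝ} (hγ₀ : 0 < γ) (hγ₁ : γ ≤ 1) (hT : 0 ≤ T)
    (hv : 0 < v) : γ ^ (2 * ⌈T / v⌉₊) ∈ Set.Icc (γ ^ (2 / v * T + 2)) (γ ^ (2 / v * T)) := by
  have hx : 2 / v * T = 2 * (T / v) := by ring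
  have hceil := Nat.ceil_lt_add_one (div_nonneg hT hv.le)
  rw [← Real.rpow_natCast, Nat.cast_mul, Nat.cast_two]
  exact ⟨Real.rpow_le_rpow_of_exponent_ge hγ₀ hγ₁ (by linarith),
    Real.rpow_le_rpow_of_exponent_ge hγ₀ hγ₁ (by linarith [Nat.le_ceil (T / v)])⟩

/-- `trace ((G Λ⁻¹ Gᴴ)⁻¹)` for `Λ = diag t`. -/
noncomputable def codedErrorBound {k n : ℕ} (G : Matrix (Fin k) (Fin n) ℂ) (t : Fin n → ℝ) : ℝ :=
  ((G * (diagonal fun j => (t j : ℂ))⁻¹ * Gᴴ)⁻¹).trace.re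

lemma codedErrorBound_mem_Icc {k n : ℕ} (hkn : k ≤ n) {G : Matrix (Fin k) (Fin n) ℂ}
    (hGG : G * Gᴴ = 1) (hsmin : 0 < sMin hkn G) {t : Fin n → ℝ} {S : Finset (Fin n)}
    (hS : S.card = k) {a b : ℝ} (ha : 0 < a) (hb : 0 < b) (hta : ∀ j, a ≤ t j)
    (htb : ∀ j ∈ S, t j ≤ b) :
    codedErrorBound G t ∈ Set.Icc (k * a) (k * b / sMin hkn G) := by
  have ht : ∀ j, 0 < t j := fun j => ha.trans_le (hta j)
  have hinv : (diagonal fun j => (t j : ℂ))⁻¹ = diagonal fun j => (((t j)⁻¹ : ℝ) : ℂ) := by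
    refine inv_eq_right_inv ?_
    rw [diagonal_mul_diagonal, ← diagonal_one]
    congr 1
    ext j
    push_cast
    exact mul_inv_cancel₀ (by exact_mod_cast (ht j).ne')
  set A := G * diagonal (fun j => (((t j)⁻¹ : ℝ) : ℂ)) * Gᴴ
  have hA : A.IsHermitian :=
    isHermitian_mul_mul_conjTranspose G (isHermitian_diagonal_of_self_adjoint _ (by ext; simp))
  have hquad (x : Fin k → ℂ) :
      RCLike.re (star x ⬝ᵥ A *ᵥ x) = ∑ j, (t j)⁻¹ * ‖(Gᴴ *ᵥ x) j‖ ^ 2 :=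
    re_star_dotProduct_mul_diagonal_mul_conjTranspose_mulVec G (fun j => (t j)⁻¹) x
  have hlow (x : Fin k → ℂ) :
      sMin hkn G / b * ∑ i, ‖x i‖ ^ 2 ≤ RCLike.re (star x ⬝ᵥ A *ᵥ x) := by
    calc sMin hkn G / b * ∑ i, ‖x i‖ ^ 2
        ≤ b⁻¹ * ∑ j ∈ S, ‖(Gᴴ *ᵥ x) j‖ ^ 2 := by
          rw [div_eq_inv_mul, mul_assoc]
          gcongr
          exact sMin_mul_sum_norm_sq_le hkn G hS x
      _ ≤ ∑ j ∈ S, (t j)⁻¹ * ‖(Gᴴ *ᵥ x) j‖ ^ 2 := by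
          rw [Finset.mul_sum]
          gcongr with j hj
          · exact ht j
          · exact htb j hj
      _ ≤ ∑ j, (t j)⁻¹ * ‖(Gᴴ *ᵥ x) j‖ ^ 2 :=
          Finset.sum_le_sum_of_subset_of_nonneg (Finset.subset_univ S)
            fun j _ _ => by have := ht j; positivity
      _ = _ := (hquad x).symm
  have hup (x : Fin k → ℂ) : RCLike.re (star x ⬝ᵥ A *ᵥ x) ≤ (1 / a) * ∑ i, ‖x i‖ ^ 2 := by
    rw [hquad, ← sum_norm_sq_conjTranspose_mulVec hGG x, Finset.mul_sum]
    gcongr with j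
    rw [one_div]
    exact inv_anti₀ ha (hta j)
  have hbounds := hA.re_trace_inv_mem_Icc (div_pos hsmin hb) hlow hup
  rw [Fintype.card_fin, div_div_eq_mul_div, div_div_eq_mul_div, div_one] at hbounds
  rwa [codedErrorBound, hinv]

lemma codedErrorBound_ceil_div_mem_Icc {k n : ℕ} (hkn : k ≤ n) {G : Matrix (Fin k) (Fin n) ℂ}
    (hGG : G * Gᴴ = 1) (hsmin : 0 < sMin hkn G) {γ m M : ℝ} (hγ₀ : 0 < γ) (hγ₁ : γ ≤ 1)
    (hm : 0 < m) (hM : 0 < M) {τ : ℕ → ℝ}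
    (hτ : ∀ l, τ l ∈ Set.Icc (m * γ ^ (2 * l)) (M * γ ^ (2 * l))) {v : Fin n → ℝ}
    (hv : ∀ i, 0 < v i) {fastest : Fin n} (hfastest : ∀ j, v fastest ≤ v j)
    {S : Finset (Fin n)} (hS : S.card = k) {w : ℝ} (hw : 0 < w) (hSw : ∀ j ∈ S, v j ≤ w)
    {T : ℝ} (hT : 0 ≤ T) :
    codedErrorBound G (fun i => τ ⌈T / v i⌉₊) ∈
      Set.Icc (k * m * γ ^ (2 / v fastest * T + 2)) (k * M / sMin hkn G * γ ^ (2 / w * T)) := by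
  have hmono {x y : ℝ} (hx : 0 < x) (hxy : x ≤ y) : γ ^ (2 * ⌈T / x⌉₊) ≤ γ ^ (2 * ⌈T / y⌉₊) :=
    pow_le_pow_of_le_one hγ₀.le hγ₁
      (Nat.mul_le_mul_left 2 (Nat.ceil_le_ceil (div_le_div_of_nonneg_left hT hx hxy)))
  have hbound := codedErrorBound_mem_Icc hkn hGG hsmin (t := fun i => τ ⌈T / v i⌉₊) hS
    (by positivity) (by positivity)
    (fun j => (mul_le_mul_of_nonneg_left (hmono (hv _) (hfastest j)) hm.le).trans (hτ _).1)
    (fun j hj => (hτ _).2.trans (mul_le_mul_of_nonneg_left (hmono (hv _) (hSw j hj)) hM.le))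
  have hfast := pow_two_mul_ceil_div_mem_Icc hγ₀ hγ₁ hT (hv fastest)
  have hslow := pow_two_mul_ceil_div_mem_Icc hγ₀ hγ₁ hT hw
  constructor
  · calc (k * m : ℝ) * γ ^ (2 / v fastest * T + 2)
        ≤ k * (m * γ ^ (2 * ⌈T / v fastest⌉₊)) := by rw [mul_assoc]; gcongr; exact hfast.1
      _ ≤ _ := hbound.1
  · calc _ ≤ k * (M * γ ^ (2 * ⌈T / w⌉₊)) / sMin hkn G := hbound.2
      _ = k * M / sMin hkn G * γ ^ (2 * ⌈T / w⌉₊) := by ring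
      _ ≤ _ := by gcongr; exact hslow.2

lemma le_liminf_neg_log_div_of_rpow_bounds {R : ℝ → ℝ} {γ a b c K K' : ℝ} (hγ : 0 < γ)
    (hK : 0 < K) (hK' : 0 < K')
    (hR : ∀ᶠ T in atTop, R T ∈ Set.Icc (K' * γ ^ (b * T + c)) (K * γ ^ (a * T))) :
    a * Real.log (1 / γ) ≤ liminf (fun T => -(1 / T) * Real.log (R T)) atTop := by
  set f := fun T => -(1 / T) * Real.log (R T)
  set g := fun T : ℝ => a * Real.log (1 / γ) - Real.log K / T
  set h := fun T : ℝ => -Real.log K' / T + (b + c / T) * Real.log (1 / γ)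
  have hbounds : ∀ᶠ T in atTop, g T ≤ f T ∧ f T ≤ h T := by
    filter_upwards [hR, eventually_gt_atTop 0] with T ⟨hlo, hhi⟩ hT
    have hRpos : 0 < R T := lt_of_lt_of_le (by positivity) hlo
    have hup : Real.log (R T) ≤ Real.log K + a * T * Real.log γ := by
      calc _ ≤ Real.log (K * γ ^ (a * T)) := Real.log_le_log hRpos hhi
        _ = _ := by rw [Real.log_mul hK.ne' (by positivity), Real.log_rpow hγ]
    have hlow : Real.log K' + (b * T + c) * Real.log γ ≤ Real.log (R T) := by
      calc _ = Real.log (K' * γ ^ (b * T + c)) := by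
            rw [Real.log_mul hK'.ne' (by positivity), Real.log_rpow hγ]
        _ ≤ _ := Real.log_le_log (by positivity) hlo
    have hT' : -(1 / T) ≤ 0 := by simp [hT.le]
    simp only [f, g, h, one_div, Real.log_inv]
    constructor
    · calc _ = -T⁻¹ * (Real.log K + a * T * Real.log γ) := by field_simp; ring
        _ ≤ _ := mul_le_mul_of_nonpos_left hup (by simpa using hT')
    · calc _ ≤ -T⁻¹ * (Real.log K' + (b * T + c) * Real.log γ) :=
            mul_le_mul_of_nonpos_left hlow (by simpa using hT')
        _ = _ := by field_simp; ring
  have hg : Tendsto g atTop (𝓝 (a * Real.log (1 / γ))) := by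
    simpa [g] using (tendsto_const_nhds (x := a * Real.log (1 / γ))).sub
      ((tendsto_const_nhds (x := Real.log K)).div_atTop tendsto_id)
  have hh : Tendsto h atTop (𝓝 (b * Real.log (1 / γ))) := by
    have h0 (y : ℝ) : Tendsto (fun T : ℝ => y / T) atTop (𝓝 0) :=
      tendsto_const_nhds.div_atTop tendsto_id
    simpa [h] using (h0 (-Real.log K')).add (((h0 c).const_add b).mul_const (Real.log (1 / γ)))
  calc a * Real.log (1 / γ) = liminf g atTop := hg.liminf_eq.symm
    _ ≤ liminf f atTop := liminf_le_liminf (hbounds.mono fun _ hT => hT.1) hg.isBoundedUnder_ge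
        (hh.isBoundedUnder_le.mono_le (hbounds.mono fun _ hT => hT.2)).isCoboundedUnder_ge

/-- Theorem 7, coded part: the error exponent of the coded scheme.
With `B = P Θ P⁻¹`, `γ = max_j |γ_j| ∈ (0,1)`, `C_E` positive definite, a `k × n`
generator matrix `G` with orthonormal rows whose `s_min` is positive, positive
per-iteration times `v₁,…,v_n` with `k`-th order statistic `v_{(k)}`, and
`Λ(T) = diag(trace C(⌈T/v₁⌉),…,trace C(⌈T/v_n⌉))`:
`liminf_{T→∞} -(1/T) log trace((G Λ(T)⁻¹ Gᴴ)⁻¹) ≥ (2 / v_{(k)}) log(1/γ)`. -/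
theorem coded_error_exponent_lower_bound
    {N k n : ℕ} (hk : 0 < k) (hkn : k < n)
    (P : Matrix (Fin N) (Fin N) ℝ) (hP : IsUnit P.det)
    (γv : Fin N → ℝ)
    (B : Matrix (Fin N) (Fin N) ℝ)
    (hB : B = P * Matrix.diagonal γv * P⁻¹)
    (γ : ℝ) (hγ_ub : ∀ j, |γv j| ≤ γ) (hγ_att : ∃ j, |γv j| = γ)
    (hγ_pos : 0 < γ) (hγ_lt : γ < 1)
    (CE : Matrix (Fin N) (Fin N) ℝ) (hCE : CE.PosDef)
    (G : Matrix (Fin k) (Fin n) ℂ) (hGG : G * Gᴴ = 1)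
    (hsmin : 0 < sMin hkn.le G)
    (v : Fin n → ℝ) (hv : ∀ i, 0 < v i) :
    (2 / v (Tuple.sort v ⟨k - 1, by omega⟩)) * Real.log (1 / γ) ≤
      Filter.liminf
        (fun T : ℝ =>
          -(1 / T) * Real.log
            (((G * (Matrix.diagonal fun i =>
                ((matC B CE ⌈T / v i⌉₊).trace : ℂ))⁻¹ * Gᴴ)⁻¹).trace.re))
        atTop := by
  obtain ⟨m, M, hm, hM, htrace⟩ := exists_trace_matC_mem_Icc hP hB hγ_ub hγ_att hCE
  obtain ⟨S, hS, hSv⟩ := Tuple.exists_card_eq_forall_le_sort v ⟨k - 1, by omega⟩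
  have : Nonempty (Fin n) := ⟨⟨0, by omega⟩⟩
  obtain ⟨fastest, hfastest⟩ := Finite.exists_min v
  refine le_liminf_neg_log_div_of_rpow_bounds (K := k * M / sMin hkn.le G) (K' := k * m)
    (b := 2 / v fastest) (c := 2)
    (R := fun T => codedErrorBound G fun i => (matC B CE ⌈T / v i⌉₊).trace)
    hγ_pos (by have := hk; positivity) (by positivity) ?_
  filter_upwards [eventually_ge_atTop 0] with T hT
  exact codedErrorBound_ceil_div_mem_Icc hkn.le hGG hsmin hγ_pos hγ_lt.le hm hM htrace hv
    hfastest (hS.trans (Nat.sub_add_cancel hk)) (hv _) hSv hT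
end
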